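/- arXiv:1404.4339 — 12 statements merged into one kernel-verified Lean document; each statement's English description precedes it below -/
import Mathlib

section
/- Let b > 0 and let f be a continuous function on [0,b] such that f is differentiable with negative derivative on (0,b), f(b) = 0, and ∫₀^b f(x) dx = 1. If the differential entropies of f and of its inverse function f⁻¹ both exist, then -∫₀^b f(x) ln(f(x)) dx - ∫₀^{f(0)} f⁻¹(y) ln(f⁻¹(y)) dy = -1 - ∫₀^b f(x) ln(x f(x)) dx. -/
/-!
Substituting `y = f x` turns `∫₀^{f 0} g log g` into `-∫₀^b x log x · f' x dx`, and integrating by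
parts gives `∫₀^b (log x + 1) f x dx`, since `x log x · f x` vanishes at both ends; it remains to
split `log (x f x) = log x + log (f x)`. Both steps are done at once, so that nothing about `f'`
beyond its existence is needed: with `h x = x log x`, the function
`t ↦ ∫_{f b}^{f t} h ∘ g - ∫_t^b h' f - h t · f t` has zero derivative on `(0, b)`.
-/

open MeasureTheory Set

theorem IsCompact.continuousOn_image_of_leftInvOn {α β : Type*} [TopologicalSpace α]
    [TopologicalSpace β] [T2Space β] {f : α → β} {g : β → α} {s : Set α} (hs : IsCompact s)
    (hf : ContinuousOn f s) (hgf : LeftInvOn g f s) : ContinuousOn g (f '' s) := by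
  refine continuousOn_iff_isClosed.2 fun C hC => ⟨f '' (C ∩ s), ?_, ?_⟩
  · exact ((hs.inter_left hC).image_of_continuousOn (hf.mono inter_subset_right)).isClosed
  · rw [inter_eq_self_of_subset_left (image_mono inter_subset_right), hgf.image_inter']

section InverseIntegral

variable {f f' g h h' : ℝ → ℝ} {a b : ℝ}

theorem hasDerivAt_integral_comp_leftInvOn_sub (hab : a ≤ b)
    (hf_anti : StrictAntiOn f (Icc a b)) (hf' : ∀ x ∈ Ioo a b, HasDerivAt f (f' x) x)
    (hgf : LeftInvOn g f (Icc a b)) (hh' : ∀ x ∈ Ioo a b, HasDerivAt h (h' x) x)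
    (hhg : IntervalIntegrable (fun y => h (g y)) volume (f b) (f a))
    (hhg_cont : ContinuousOn (fun y => h (g y)) (Ioo (f b) (f a)))
    (hh'f : IntervalIntegrable (fun x => h' x * f x) volume a b)
    (hh'f_cont : ContinuousOn (fun x => h' x * f x) (Ioo a b)) {t : ℝ} (ht : t ∈ Ioo a b) :
    HasDerivAt (fun t => (∫ y in f b..f t, h (g y)) - (∫ x in t..b, h' x * f x) - h t * f t)
      0 t := by
  have hft : f t ∈ Ioo (f b) (f a) :=
    ⟨hf_anti (Ioo_subset_Icc_self ht) (right_mem_Icc.2 hab) ht.2,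
      hf_anti (left_mem_Icc.2 hab) (Ioo_subset_Icc_self ht) ht.1⟩
  have hΦ : HasDerivAt (fun u => ∫ y in f b..u, h (g y)) (h (g (f t))) (f t) := by
    refine intervalIntegral.integral_hasDerivAt_right (hhg.mono_set ?_)
      (hhg_cont.stronglyMeasurableAtFilter isOpen_Ioo _ hft)
      (hhg_cont.continuousAt (Ioo_mem_nhds hft.1 hft.2))
    rw [uIcc_of_le hft.1.le, uIcc_of_le (hft.1.trans hft.2).le]
    exact Icc_subset_Icc_right hft.2.le
  have hΨ : HasDerivAt (fun t => ∫ x in t..b, h' x * f x) (-(h' t * f t)) t := by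
    refine intervalIntegral.integral_hasDerivAt_left (hh'f.mono_set ?_)
      (hh'f_cont.stronglyMeasurableAtFilter isOpen_Ioo _ ht)
      (hh'f_cont.continuousAt (Ioo_mem_nhds ht.1 ht.2))
    rw [uIcc_of_le ht.2.le, uIcc_of_le hab]
    exact Icc_subset_Icc_left ht.1.le
  have hG := ((hΦ.comp t (hf' t ht)).sub hΨ).sub ((hh' t ht).mul (hf' t ht))
  rwa [hgf (Ioo_subset_Icc_self ht), show h t * f' t - -(h' t * f t) - (h' t * f t + h t * f' t) = 0 by ring] at hG

theorem integral_comp_leftInvOn_of_strictAntiOn (hab : a ≤ b) (hf : ContinuousOn f (Icc a b))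
    (hf_anti : StrictAntiOn f (Icc a b)) (hf' : ∀ x ∈ Ioo a b, HasDerivAt f (f' x) x)
    (hgf : LeftInvOn g f (Icc a b)) (hh : ContinuousOn h (Icc a b))
    (hh' : ∀ x ∈ Ioo a b, HasDerivAt h (h' x) x) (hh'_cont : ContinuousOn h' (Ioo a b))
    (hhg : IntervalIntegrable (fun y => h (g y)) volume (f b) (f a))
    (hh'f : IntervalIntegrable (fun x => h' x * f x) volume a b) :
    ∫ y in f b..f a, h (g y) = h a * f a - h b * f b + ∫ x in a..b, h' x * f x := by
  have himage : f '' Icc a b = Icc (f b) (f a) :=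
    hf.image_Icc_of_antitoneOn hab hf_anti.antitoneOn
  have hfba : f b ≤ f a := hf_anti.antitoneOn (left_mem_Icc.2 hab) (right_mem_Icc.2 hab) hab
  have hhg_cont : ContinuousOn (fun y => h (g y)) (Icc (f b) (f a)) := by
    rw [← himage]
    refine hh.comp (isCompact_Icc.continuousOn_image_of_leftInvOn hf hgf) ?_
    rintro _ ⟨x, hx, rfl⟩
    rwa [hgf hx]
  have hG_cont : ContinuousOn
      (fun t => (∫ y in f b..f t, h (g y)) - (∫ x in t..b, h' x * f x) - h t * f t) (Icc a b) := by
    have hΦ := intervalIntegral.continuousOn_primitive_interval' hhg left_mem_uIcc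
    have hΨ := intervalIntegral.continuousOn_primitive_interval_left
      ((intervalIntegrable_iff' (by finiteness)).1 hh'f)
    rw [uIcc_of_le hfba] at hΦ
    rw [uIcc_of_le hab] at hΨ
    exact ((hΦ.comp hf (himage ▸ mapsTo_image f _)).sub hΨ).sub (hh.mul hf)
  have hFTC := intervalIntegral.integral_eq_sub_of_hasDerivAt_of_le hab hG_cont
    (fun t ht => hasDerivAt_integral_comp_leftInvOn_sub hab hf_anti hf' hgf hh'
      hhg (hhg_cont.mono Ioo_subset_Icc_self) hh'f
      (hh'_cont.mul (hf.mono Ioo_subset_Icc_self)) ht) intervalIntegrable_const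
  simp only [intervalIntegral.integral_zero, intervalIntegral.integral_same] at hFTC
  linarith

end InverseIntegral

theorem Real.mul_log_mul_eq_add {x y : ℝ} (hx : x ≠ 0) :
    y * Real.log (x * y) = y * Real.log x + y * Real.log y := by
  rcases eq_or_ne y 0 with rfl | hy
  · simp
  · rw [Real.log_mul hx hy, mul_add]

/-- If `f` is continuous on `[0,b]`, differentiable with negative derivative
on `(0,b)`, `f b = 0`, `∫₀^b f = 1`, and `g` is the inverse function of `f`
(mapping `[0, f 0]` back to `[0, b]`), and the differential entropies of `f` and `g` both
exist, then the sum of the two differential entropies equals `-1 - ∫₀^b f(x) ln(x f(x)) dx`. -/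
theorem sum_of_differential_entropies_eq (b : ℝ) (hb : 0 < b) (f g : ℝ → ℝ)
    (hf_cont : ContinuousOn f (Set.Icc 0 b))
    (hf_deriv : ∀ x ∈ Set.Ioo 0 b, ∃ d : ℝ, HasDerivAt f d x ∧ d < 0)
    (hfb : f b = 0)
    (hf_int : (∫ x in (0:ℝ)..b, f x) = 1)
    (hg : Set.InvOn g f (Set.Icc 0 b) (Set.Icc 0 (f 0)))
    (h_ent_f : IntervalIntegrable (fun x => f x * Real.log (f x)) volume 0 b)
    (h_ent_g : IntervalIntegrable (fun y => g y * Real.log (g y)) volume 0 (f 0))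
    (h_ent_xf : IntervalIntegrable (fun x => f x * Real.log (x * f x)) volume 0 b) :
    (-∫ x in (0:ℝ)..b, f x * Real.log (f x)) -
        (∫ y in (0:ℝ)..(f 0), g y * Real.log (g y)) =
      -1 - ∫ x in (0:ℝ)..b, f x * Real.log (x * f x) := by
  choose! f' hf' hf'_neg using hf_deriv
  have hf_anti : StrictAntiOn f (Icc 0 b) := by
    refine strictAntiOn_of_hasDerivWithinAt_neg (f' := f') (convex_Icc 0 b) hf_cont ?_ ?_ <;>
      rw [interior_Icc]
    exacts [fun x hx => (hf' x hx).hasDerivWithinAt, hf'_neg]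
  have hsplit : EqOn (fun x => f x * Real.log (x * f x) - f x * Real.log (f x) + f x)
      (fun x => (Real.log x + 1) * f x) (uIoc 0 b) := fun x hx => by
    rw [uIoc_of_le hb.le] at hx
    simp only [Real.mul_log_mul_eq_add hx.1.ne']
    ring
  have hf_intble : IntervalIntegrable f volume 0 b := hf_cont.intervalIntegrable_of_Icc hb.le
  have h_ent_xf_sub := h_ent_xf.sub h_ent_f
  have key := integral_comp_leftInvOn_of_strictAntiOn (h := fun x => x * Real.log x) hb.le
    hf_cont hf_anti hf' hg.1 Real.continuous_mul_log.continuousOn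
    (fun x hx => Real.hasDerivAt_mul_log hx.1.ne')
    ((Real.continuousOn_log.mono fun x hx => hx.1.ne').add continuousOn_const)
    (by rwa [hfb]) ((h_ent_xf_sub.add hf_intble).congr hsplit)
  rw [← intervalIntegral.integral_congr_ae (ae_of_all _ hsplit), intervalIntegral.integral_add
    h_ent_xf_sub hf_intble, intervalIntegral.integral_sub h_ent_xf h_ent_f, hfb] at key
  simp only [Real.log_zero, mul_zero, zero_mul, sub_zero, zero_add, hf_int] at key
  rw [key]
  ring
end

section
/- Let D be a finite sequence d₁ ≥ d₂ ≥ ⋯ ≥ d_n > 0 with mean μ, and let D* denote the rescaled sequence d₁/μ, …, d_n/μ. Then f_{D*} and 1 - L_{D*} are both corner densities (on [0,1) and [0,∞) respectively), and they have the same genial entropy: -1 - ∫₀¹ f_{D*}(x) ln(x f_{D*}(x)) dx = -1 - ∫₀^∞ (1 - L_{D*}(y)) ln(y (1 - L_{D*}(y))) dy. -/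
/-!
Write `w k = d_{k+1}/μ` (with `w n = 0`). Then `f_{D*}` is the staircase with value `w k` on
`[k/n, (k+1)/n)`, and `1 - L_{D*}` is the same staircase read along the other axis: it has value
`(k+1)/n` on `[w (k+1), w k)`. For `Φ t = t` (area) and `Φ t = t log t - t` (entropy), the
integral over a column or row `[a, b)` of height `c` is `Φ (b c) - Φ (a c)`, because `x ↦ Φ (x c)`
is a primitive of `c` resp. of `c log (x c)`. So both integrals are sums of differences of `Φ` at
the corners of the staircase, and the column and row sums differ by a telescoping sum whose
boundary terms are both `Φ 0`.
-/

open MeasureTheory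

/-- A corner density: `I ∪ {0}` is a connected interval contained in `[0,∞)`,
`f` is nonnegative and monotone decreasing on `I`, and `∫_I f = 1`. -/
def IsCornerDensity (I : Set ℝ) (f : ℝ → ℝ) : Prop :=
  I ⊆ Set.Ici 0 ∧ (I ∪ {0}).OrdConnected ∧ (∀ x ∈ I, 0 ≤ f x) ∧
    AntitoneOn f I ∧ (∫ x in I, f x) = 1

open Real Set intervalIntegral
open scoped Finset

theorem integral_eq_sum_of_eqOn_uIoo {E : Type*} [NormedAddCommGroup E] [NormedSpace ℝ E]
    {ν : Measure ℝ} [NullSingletonClass ν] {f : ℝ → E} {g : ℕ → ℝ → E} {a : ℕ → ℝ} {m : ℕ}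
    (hf : ∀ k < m, EqOn f (g k) (uIoo (a k) (a (k + 1))))
    (hg : ∀ k < m, IntervalIntegrable (g k) ν (a k) (a (k + 1))) :
    ∫ x in a 0..a m, f x ∂ν = ∑ k ∈ Finset.range m, ∫ x in a k..a (k + 1), g k x ∂ν := by
  rw [← sum_integral_adjacent_intervals fun k hk => (hg k hk).congr_uIoo (hf k hk).symm]
  exact Finset.sum_congr rfl fun k hk => integral_congr_uIoo (hf k (Finset.mem_range.1 hk))

theorem intervalIntegrable_mul_log_mul_const (a b c : ℝ) :
    IntervalIntegrable (fun x => c * log (x * c)) volume a b := by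
  rcases eq_or_ne c 0 with rfl | hc
  · simp
  refine IntervalIntegrable.const_mul ?_ c
  simpa [hc] using (intervalIntegrable_log' (a := a * c) (b := b * c)).comp_mul_right (c := c)

theorem integral_mul_log_mul_const (a b c : ℝ) :
    ∫ x in a..b, c * log (x * c) =
      (b * c * log (b * c) - b * c) - (a * c * log (a * c) - a * c) := by
  rcases eq_or_ne c 0 with rfl | hc
  · simp
  rw [intervalIntegral.integral_const_mul,
    intervalIntegral.integral_comp_mul_right (fun x => log x) hc, integral_log, smul_eq_mul]
  field_simp
  ring

theorem sum_staircase (Φ : ℝ → ℝ) (u w : ℕ → ℝ) (n : ℕ) (h : Φ (u 0 * w 0) = Φ (u n * w n)) :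
    ∑ k ∈ Finset.range n, (Φ (u (k + 1) * w k) - Φ (u k * w k)) =
      ∑ k ∈ Finset.range n, (Φ (w k * u (k + 1)) - Φ (w (k + 1) * u (k + 1))) := by
  have := Finset.sum_range_sub (fun k => Φ (u k * w k)) n
  simp only [Finset.sum_sub_distrib, mul_comm (w _)] at this ⊢
  linarith

section Staircase

variable {n : ℕ} {w : ℕ → ℝ}

theorem card_filter_lt_eq_of_antitone (hw : Antitone w) {m : ℕ} (hmn : m ≤ n) {y : ℝ}
    (hm : w m ≤ y) (hy : ∀ i < m, y < w i) : #{i ∈ Finset.range n | y < w i} = m := by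
  suffices {i ∈ Finset.range n | y < w i} = Finset.range m by simp [this]
  ext i
  simp only [Finset.mem_filter, Finset.mem_range]
  refine ⟨fun ⟨_, hi⟩ => ?_, fun hi => ⟨hi.trans_le hmn, hy i hi⟩⟩
  by_contra! him
  exact (hi.trans_le (hw him)).not_ge hm

theorem floor_mul_lt_and_eq_of_eqOn_Ico (hn : 0 < n) {f : ℝ → ℝ}
    (hf : ∀ k < n, ∀ x ∈ Ico ((k : ℝ) / n) ((k + 1) / n), f x = w k) {x : ℝ}
    (hx : x ∈ Ico (0 : ℝ) 1) : ⌊x * n⌋₊ < n ∧ f x = w ⌊x * n⌋₊ := by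
  have hn' : (0 : ℝ) < n := by exact_mod_cast hn
  have hxn : 0 ≤ x * n := mul_nonneg hx.1 hn'.le
  have hlt : ⌊x * n⌋₊ < n := by
    rw [Nat.floor_lt hxn]
    nlinarith [hx.2]
  refine ⟨hlt, hf _ hlt x ⟨?_, ?_⟩⟩
  · rw [div_le_iff₀ hn']; exact Nat.floor_le hxn
  · rw [lt_div_iff₀ hn']; exact Nat.lt_floor_add_one _

theorem antitoneOn_of_eqOn_Ico (hn : 0 < n) (hw : Antitone w) {f : ℝ → ℝ}
    (hf : ∀ k < n, ∀ x ∈ Ico ((k : ℝ) / n) ((k + 1) / n), f x = w k) :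
    AntitoneOn f (Ico 0 1) := by
  intro x hx y hy hxy
  rw [(floor_mul_lt_and_eq_of_eqOn_Ico hn hf hx).2, (floor_mul_lt_and_eq_of_eqOn_Ico hn hf hy).2]
  exact hw (Nat.floor_mono (by gcongr))

theorem nonneg_of_eqOn_Ico (hn : 0 < n) (hw : Antitone w) (hwn : w n = 0) {f : ℝ → ℝ}
    (hf : ∀ k < n, ∀ x ∈ Ico ((k : ℝ) / n) ((k + 1) / n), f x = w k) :
    ∀ x ∈ Ico (0 : ℝ) 1, 0 ≤ f x := by
  intro x hx
  obtain ⟨hlt, hfx⟩ := floor_mul_lt_and_eq_of_eqOn_Ico hn hf hx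
  exact hfx ▸ hwn ▸ hw hlt.le

theorem setIntegral_Ico_zero_one_eq_sum (φ : ℝ → ℝ → ℝ)
    (hφ : ∀ a b c, IntervalIntegrable (φ · c) volume a b) (hn : 0 < n) {f : ℝ → ℝ}
    (hf : ∀ k < n, ∀ x ∈ Ico ((k : ℝ) / n) ((k + 1) / n), f x = w k) :
    ∫ x in Ico (0 : ℝ) 1, φ x (f x) =
      ∑ k ∈ Finset.range n, ∫ x in (k : ℝ) / n..(k + 1) / n, φ x (w k) := by
  have hn' : (0 : ℝ) < n := by exact_mod_cast hn
  have hpiece : ∀ k < n, EqOn (fun x => φ x (f x)) (fun x => φ x (w k))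
      (uIoo ((k : ℝ) / n) (((k + 1 : ℕ) : ℝ) / n)) := by
    intro k hk x hx
    rw [uIoo_of_le (by gcongr; simp), Nat.cast_succ] at hx
    simp only [hf k hk x (Ioo_subset_Ico_self hx)]
  have hsum := integral_eq_sum_of_eqOn_uIoo (a := fun k : ℕ => (k : ℝ) / n) hpiece
    fun k _ => hφ _ _ _
  simp only [Nat.cast_zero, zero_div, div_self hn'.ne', Nat.cast_succ] at hsum
  rw [integral_Ico_eq_integral_Ioo, ← integral_Ioc_eq_integral_Ioo,
    ← integral_of_le zero_le_one, hsum]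

theorem setIntegral_Ici_zero_eq_sum (φ : ℝ → ℝ → ℝ) (hφ0 : ∀ y, φ y 0 = 0)
    (hφ : ∀ a b c, IntervalIntegrable (φ · c) volume a b) (hw : Antitone w) (hwn : w n = 0)
    {h : ℝ → ℝ} (hh : ∀ y, 0 ≤ y → h y = #{i ∈ Finset.range n | y < w i} / n) :
    ∫ y in Ici (0 : ℝ), φ y (h y) =
      ∑ k ∈ Finset.range n, ∫ y in w (k + 1)..w k, φ y ((k + 1) / n) := by
  have hw0 : 0 ≤ w 0 := hwn ▸ hw (Nat.zero_le n)
  have htail : ∀ y ∈ Ici (0 : ℝ) \ Ico 0 (w 0), φ y (h y) = 0 := by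
    rintro y ⟨hy, hy'⟩
    have hwy : w 0 ≤ y := not_lt.1 fun h => hy' ⟨hy, h⟩
    rw [hh y hy, card_filter_lt_eq_of_antitone hw (Nat.zero_le n) hwy (by simp)]
    simp [hφ0]
  have hpiece : ∀ k < n, EqOn (fun y => φ y (h y)) (fun y => φ y ((k + 1) / n))
      (uIoo (w k) (w (k + 1))) := by
    intro k hk y hy
    rw [uIoo_of_ge (hw k.le_succ)] at hy
    have hy0 : 0 ≤ y := (hwn ▸ hw hk).trans hy.1.le
    simp only [hh y hy0, card_filter_lt_eq_of_antitone hw hk hy.1.le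
      fun i hi => hy.2.trans_le (hw (Nat.lt_succ_iff.1 hi)), Nat.cast_succ]
  rw [setIntegral_eq_of_subset_of_forall_sdiff_eq_zero measurableSet_Ici Ico_subset_Ici_self
    htail, integral_Ico_eq_integral_Ioo, ← integral_Ioc_eq_integral_Ioo, ← integral_of_le hw0,
    ← hwn, integral_symm, integral_eq_sum_of_eqOn_uIoo hpiece fun k _ => hφ _ _ _,
    ← Finset.sum_neg_distrib]
  exact Finset.sum_congr rfl fun k _ => (integral_symm _ _).symm

theorem sum_integral_columns_eq_sum_integral_rows (Φ : ℝ → ℝ) (φ : ℝ → ℝ → ℝ)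
    (hΦ : ∀ a b c, ∫ x in a..b, φ x c = Φ (b * c) - Φ (a * c)) (hwn : w n = 0) :
    ∑ k ∈ Finset.range n, ∫ x in (k : ℝ) / n..(k + 1) / n, φ x (w k) =
      ∑ k ∈ Finset.range n, ∫ y in w (k + 1)..w k, φ y ((k + 1) / n) := by
  simpa only [hΦ, Nat.cast_succ] using
    sum_staircase Φ (fun k : ℕ => (k : ℝ) / n) w n (by simp [hwn])

theorem sum_integral_columns_const (hn : 0 < n) :
    ∑ k ∈ Finset.range n, ∫ _ in (k : ℝ) / n..(k + 1) / n, w k =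
      (∑ k ∈ Finset.range n, w k) / n := by
  rw [Finset.sum_div]
  refine Finset.sum_congr rfl fun k _ => ?_
  rw [intervalIntegral.integral_const, smul_eq_mul]
  field_simp
  ring

theorem isCornerDensity_Ico_of_eqOn_Ico (hn : 0 < n) (hw : Antitone w) (hwn : w n = 0)
    (hsum : ∑ k ∈ Finset.range n, w k = n) {f : ℝ → ℝ}
    (hf : ∀ k < n, ∀ x ∈ Ico ((k : ℝ) / n) ((k + 1) / n), f x = w k) :
    IsCornerDensity (Ico 0 1) f := by
  refine ⟨Ico_subset_Ici_self, ?_, nonneg_of_eqOn_Ico hn hw hwn hf,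
    antitoneOn_of_eqOn_Ico hn hw hf, ?_⟩
  · rw [union_eq_self_of_subset_right (by simp)]
    exact ordConnected_Ico
  · rw [setIntegral_Ico_zero_one_eq_sum (fun _ c => c) (fun _ _ _ => intervalIntegrable_const)
      hn hf, sum_integral_columns_const hn, hsum, div_self (by positivity)]

theorem isCornerDensity_Ici_of_eq_card_filter (hn : 0 < n) (hw : Antitone w) (hwn : w n = 0)
    (hsum : ∑ k ∈ Finset.range n, w k = n) {h : ℝ → ℝ}
    (hh : ∀ y, 0 ≤ y → h y = #{i ∈ Finset.range n | y < w i} / n) :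
    IsCornerDensity (Ici 0) h := by
  refine ⟨subset_rfl, ?_, fun y hy => hh y hy ▸ by positivity, ?_, ?_⟩
  · rw [union_eq_self_of_subset_right (by simp)]
    exact ordConnected_Ici
  · intro y hy y' hy' hyy'
    rw [hh y hy, hh y' hy']
    gcongr
  · rw [setIntegral_Ici_zero_eq_sum (fun _ c => c) (fun _ => rfl)
      (fun _ _ _ => intervalIntegrable_const) hw hwn hh,
      ← sum_integral_columns_eq_sum_integral_rows id (fun _ c => c)
        (fun a b c => by simp only [intervalIntegral.integral_const, smul_eq_mul, id]; ring) hwn,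
      sum_integral_columns_const hn, hsum, div_self (by positivity)]

theorem setIntegral_Ico_zero_one_eq_setIntegral_Ici_zero (Φ : ℝ → ℝ) (φ : ℝ → ℝ → ℝ)
    (hφ0 : ∀ y, φ y 0 = 0) (hφ : ∀ a b c, IntervalIntegrable (φ · c) volume a b)
    (hΦ : ∀ a b c, ∫ x in a..b, φ x c = Φ (b * c) - Φ (a * c))
    (hn : 0 < n) (hw : Antitone w) (hwn : w n = 0) {f h : ℝ → ℝ}
    (hf : ∀ k < n, ∀ x ∈ Ico ((k : ℝ) / n) ((k + 1) / n), f x = w k)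
    (hh : ∀ y, 0 ≤ y → h y = #{i ∈ Finset.range n | y < w i} / n) :
    ∫ x in Ico (0 : ℝ) 1, φ x (f x) = ∫ y in Ici (0 : ℝ), φ y (h y) := by
  rw [setIntegral_Ico_zero_one_eq_sum φ hφ hn hf, setIntegral_Ici_zero_eq_sum φ hφ0 hφ hw hwn hh,
    sum_integral_columns_eq_sum_integral_rows Φ φ hΦ hwn]

end Staircase

noncomputable def rescaledSeq (n : ℕ) (d : ℕ → ℝ) (μ : ℝ) (i : ℕ) : ℝ :=
  if i < n then d (i + 1) / μ else 0

section RescaledSeq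

variable {n : ℕ} {d : ℕ → ℝ} {μ : ℝ}

theorem antitone_rescaledSeq (hmono : ∀ i j, 1 ≤ i → i ≤ j → j ≤ n → d j ≤ d i)
    (hpos : ∀ i, 1 ≤ i → i ≤ n → 0 < d i) (hμ : 0 < μ) : Antitone (rescaledSeq n d μ) := by
  intro i j hij
  unfold rescaledSeq
  split_ifs with hj hi
  · gcongr
    exact hmono _ _ (by omega) (by omega) (by omega)
  · omega
  · exact (div_pos (hpos _ (by omega) (by omega)) hμ).le
  · rfl

theorem rescaledSeq_self : rescaledSeq n d μ n = 0 := by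
  simp [rescaledSeq]

theorem rescaledSeq_of_lt {i : ℕ} (hi : i < n) : rescaledSeq n d μ i = d (i + 1) / μ :=
  if_pos hi

theorem sum_range_rescaledSeq :
    ∑ i ∈ Finset.range n, rescaledSeq n d μ i = (∑ i ∈ Finset.Icc 1 n, d i) / μ := by
  rw [Finset.sum_div, ← Finset.Ico_add_one_right_eq_Icc, ← zero_add 1,
    ← Finset.sum_Ico_add' (d · / μ), ← Finset.range_eq_Ico]
  exact Finset.sum_congr rfl fun i hi => rescaledSeq_of_lt (Finset.mem_range.1 hi)

theorem one_sub_card_filter_le_div (hn : 0 < n) (y : ℝ) :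
    1 - (#{i ∈ Finset.Icc 1 n | d i / μ ≤ y} : ℝ) / n =
      #{i ∈ Finset.range n | y < rescaledSeq n d μ i} / n := by
  have hshift : #{i ∈ Finset.range n | y < rescaledSeq n d μ i} =
      #{i ∈ Finset.Icc 1 n | ¬d i / μ ≤ y} := by
    refine Finset.card_nbij' (· + 1) (· - 1) (fun i hi => ?_) (fun i hi => ?_) (fun i _ => rfl)
      (fun i hi => ?_) <;>
      simp only [Finset.coe_filter, Set.mem_ofPred_eq, Finset.mem_range, Finset.mem_Icc] at hi ⊢
    · rw [rescaledSeq_of_lt hi.1] at hi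
      exact ⟨by omega, hi.2.not_ge⟩
    · rw [rescaledSeq_of_lt (by omega), Nat.sub_add_cancel hi.1.1]
      exact ⟨by omega, not_le.1 hi.2⟩
    · omega
  have hcompl : (#{i ∈ Finset.Icc 1 n | d i / μ ≤ y} : ℝ) +
      #{i ∈ Finset.Icc 1 n | ¬d i / μ ≤ y} = n := by
    exact_mod_cast (Finset.card_filter_add_card_filter_not _).trans (by simp)
  rw [hshift, eq_div_iff (by positivity), sub_mul, one_mul, div_mul_cancel₀ _ (by positivity)]
  linarith

end RescaledSeq

/-- For a sequence `d₁ ≥ ⋯ ≥ d_n > 0` with mean `μ`, both the step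
function `f_{D*}` (value `d_i/μ` on `[(i-1)/n, i/n)`) and the function `1 - L_{D*}`
(where `L_{D*}` is the empirical CDF of the `d_i/μ`) are corner densities, and they
have the same genial entropy. -/
theorem fstar_and_one_sub_Lstar_cornerDensities_same_genialEntropy
    (n : ℕ) (hn : 0 < n) (d : ℕ → ℝ)
    (hmono : ∀ i j, 1 ≤ i → i ≤ j → j ≤ n → d j ≤ d i)
    (hpos : ∀ i, 1 ≤ i → i ≤ n → 0 < d i)
    (μ : ℝ) (hμ : μ = (∑ i ∈ Finset.Icc 1 n, d i) / n)
    (fstar : ℝ → ℝ)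
    (hfstar : ∀ i, 1 ≤ i → i ≤ n →
      ∀ x ∈ Set.Ico (((i:ℝ) - 1) / n) ((i:ℝ) / n), fstar x = d i / μ)
    (Lstar : ℝ → ℝ)
    (hLstar : ∀ y, 0 ≤ y →
      Lstar y = ((Finset.Icc 1 n).filter (fun i => d i / μ ≤ y)).card / n) :
    IsCornerDensity (Set.Ico 0 1) fstar ∧
    IsCornerDensity (Set.Ici 0) (fun y => 1 - Lstar y) ∧
    (-1 - ∫ x in Set.Ico (0:ℝ) 1, fstar x * Real.log (x * fstar x)) =
      (-1 - ∫ y in Set.Ici (0:ℝ), (1 - Lstar y) * Real.log (y * (1 - Lstar y))) := by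
  have hdsum : 0 < ∑ i ∈ Finset.Icc 1 n, d i :=
    Finset.sum_pos (fun i hi => hpos i (Finset.mem_Icc.1 hi).1 (Finset.mem_Icc.1 hi).2)
      ⟨1, Finset.mem_Icc.2 ⟨le_rfl, hn⟩⟩
  have hμ0 : 0 < μ := hμ ▸ by positivity
  set w := rescaledSeq n d μ
  have hw : Antitone w := antitone_rescaledSeq hmono hpos hμ0
  have hwn : w n = 0 := rescaledSeq_self
  have hsum : ∑ k ∈ Finset.range n, w k = n := by
    rw [sum_range_rescaledSeq, hμ]
    field_simp
  have hf : ∀ k < n, ∀ x ∈ Ico ((k : ℝ) / n) ((k + 1) / n), fstar x = w k := by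
    intro k hk x hx
    rw [hfstar (k + 1) (by omega) (by omega) x (by push_cast; simpa using hx)]
    exact (rescaledSeq_of_lt hk).symm
  have hh : ∀ y, 0 ≤ y → 1 - Lstar y = #{i ∈ Finset.range n | y < w i} / n := fun y hy => by
    rw [hLstar y hy, one_sub_card_filter_le_div hn]
  refine ⟨isCornerDensity_Ico_of_eqOn_Ico hn hw hwn hsum hf,
    isCornerDensity_Ici_of_eq_card_filter hn hw hwn hsum hh, ?_⟩
  rw [setIntegral_Ico_zero_one_eq_setIntegral_Ici_zero (fun t => t * log t - t)
    (fun x c => c * log (x * c)) (by simp) intervalIntegrable_mul_log_mul_const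
    integral_mul_log_mul_const hn hw hwn hf hh]
end

section
/- Suppose y₁ ≥ y₂ ≥ ⋯ ≥ y_n ≥ 0 and 0 = t₀ ≤ t₁ ≤ t₂ ≤ ⋯ ≤ t_n. Let A = Σ_{i=1}^n y_i (t_i - t_{i-1}). Then Σ_{i=1}^n ( t_{i-1} y_i ln(t_{i-1} y_i) - t_i y_i ln(t_i y_i) ) ≥ -A ln A, with the convention 0 ln 0 = 0. -/
/-!
Write `φ x = x log x`, convex on `[0, ∞)`; the claim is `∑ (φ (t_{i-1} y_i) - φ (t_i y_i)) ≥ φ 0 - φ A`,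
and this holds for every such convex `φ`. Induct on `n`. Passing from `n` to `n + 1` adds
`b = y_{n+1} (t_{n+1} - t_n)` to `A_n` and adds the term `φ c - φ (c + b)` with `c = t_n y_{n+1}`.
Since `y` is nonincreasing, `c = y_{n+1} ∑_{i ≤ n} (t_i - t_{i-1}) ≤ A_n`, and increments
`φ (x + b) - φ x` of a convex function grow with `x`, so `φ c - φ (c + b) ≥ φ A_n - φ (A_n + b)`.
-/

open Finset

theorem ConvexOn.map_add_sub_map_le_of_le {𝕜 β : Type*} [Field 𝕜] [LinearOrder 𝕜]
    [IsStrictOrderedRing 𝕜] [AddCommGroup β] [PartialOrder β] [IsOrderedAddMonoid β]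
    [Module 𝕜 β] {s : Set 𝕜} {f : 𝕜 → β} (hf : ConvexOn 𝕜 s f) {a b c : 𝕜}
    (hc : c ∈ s) (hab : a + b ∈ s) (hca : c ≤ a) (hb : 0 ≤ b) :
    f (c + b) - f c ≤ f (a + b) - f a := by
  rcases hb.eq_or_lt with rfl | hb
  · simp
  rcases hca.eq_or_lt with rfl | hca
  · simp
  have hd : 0 < a - c + b := by linarith
  set p := (a - c) / (a - c + b)
  set q := b / (a - c + b)
  have hp : 0 ≤ p := div_nonneg (by linarith) hd.le
  have hq : 0 ≤ q := div_nonneg hb.le hd.le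
  have hpq : p + q = 1 := by rw [← add_div, div_self hd.ne']
  have hcb : p • c + q • (a + b) = c + b := by
    simp only [p, q, smul_eq_mul]; field_simp; ring
  have ha : q • c + p • (a + b) = a := by
    simp only [p, q, smul_eq_mul]; field_simp; ring
  have h₁ := hf.2 hc hab hp hq hpq
  have h₂ := hf.2 hc hab hq hp (by rw [add_comm, hpq])
  rw [hcb] at h₁
  rw [ha] at h₂
  rw [sub_le_sub_iff]
  calc f (c + b) + f a ≤ _ := add_le_add h₁ h₂
    _ = (p + q) • f c + (p + q) • f (a + b) := by simp only [add_smul]; abel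
    _ = f (a + b) + f c := by rw [hpq, one_smul, one_smul, add_comm]

theorem sum_Icc_sub_pred (t : ℕ → ℝ) (n : ℕ) :
    ∑ i ∈ Icc 1 n, (t i - t (i - 1)) = t n - t 0 := by
  induction n with
  | zero => simp
  | succ n ih => rw [sum_Icc_succ_top (by omega), ih, Nat.add_sub_cancel]; ring

theorem mul_sub_le_sum_Icc_mul_sub_pred {n : ℕ} {y t : ℕ → ℝ} {z : ℝ}
    (hz : ∀ i ∈ Icc 1 n, z ≤ y i) (ht : MonotoneOn t (Set.Iic n)) :
    z * (t n - t 0) ≤ ∑ i ∈ Icc 1 n, y i * (t i - t (i - 1)) := by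
  rw [← sum_Icc_sub_pred, mul_sum]
  refine sum_le_sum fun i hi => mul_le_mul_of_nonneg_right (hz i hi) (sub_nonneg.2 ?_)
  rw [mem_Icc] at hi
  exact ht (Set.mem_Iic.2 (by omega)) (Set.mem_Iic.2 hi.2) (by omega)

theorem ConvexOn.sub_map_sum_le_sum_sub_map {f : ℝ → ℝ} (hf : ConvexOn ℝ (Set.Ici 0) f)
    (n : ℕ) {y t : ℕ → ℝ} (hy : AntitoneOn y (Set.Icc 1 n)) (hy0 : ∀ i ∈ Icc 1 n, 0 ≤ y i)
    (ht0 : t 0 = 0) (ht : MonotoneOn t (Set.Iic n)) :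
    f 0 - f (∑ i ∈ Icc 1 n, y i * (t i - t (i - 1)))
      ≤ ∑ i ∈ Icc 1 n, (f (t (i - 1) * y i) - f (t i * y i)) := by
  induction n with
  | zero => simp
  | succ n ih =>
    have hle := n.le_succ
    have hIH := ih (hy.mono (Set.Icc_subset_Icc_right hle))
      (fun i hi => hy0 i (Icc_subset_Icc_right hle hi)) (ht.mono (Set.Iic_subset_Iic.2 hle))
    set A := ∑ i ∈ Icc 1 n, y i * (t i - t (i - 1))
    set b := y (n + 1) * (t (n + 1) - t n)
    set c := t n * y (n + 1)
    have hyn : 0 ≤ y (n + 1) := hy0 _ (mem_Icc.2 ⟨by omega, le_rfl⟩)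
    have hc : 0 ≤ c := mul_nonneg (ht0 ▸ ht (by simp) (by simp) n.zero_le) hyn
    have hb : 0 ≤ b := mul_nonneg hyn (sub_nonneg.2 (ht (by simp) (by simp) hle))
    have hcA : c ≤ A :=
      calc c = y (n + 1) * (t n - t 0) := by rw [ht0]; ring
        _ ≤ A := mul_sub_le_sum_Icc_mul_sub_pred
          (fun i hi => hy (by simp at hi ⊢; omega) (by simp) (by simp at hi; omega))
          (ht.mono (Set.Iic_subset_Iic.2 hle))
    have hincr := hf.map_add_sub_map_le_of_le hc (add_nonneg (hc.trans hcA) hb) hcA hb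
    rw [sum_Icc_succ_top (by omega), sum_Icc_succ_top (by omega), Nat.add_sub_cancel,
      show t (n + 1) * y (n + 1) = c + b by ring]
    linarith

/-- If `y₁ ≥ y₂ ≥ ⋯ ≥ y_n ≥ 0` and `0 = t₀ ≤ t₁ ≤ ⋯ ≤ t_n`, and
`A = Σ_{i=1}^n y_i (t_i - t_{i-1})`, then
`Σ_{i=1}^n ( t_{i-1} y_i ln(t_{i-1} y_i) - t_i y_i ln(t_i y_i) ) ≥ -A ln A`
(with the convention `0 ln 0 = 0`, which holds for `Real.log` since `Real.log 0 = 0`). -/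
theorem step_sum_log_inequality (n : ℕ) (y t : ℕ → ℝ)
    (hy : ∀ i j, 1 ≤ i → i ≤ j → j ≤ n → y j ≤ y i)
    (hy0 : ∀ i, 1 ≤ i → i ≤ n → 0 ≤ y i)
    (ht0 : t 0 = 0)
    (ht : ∀ i j, i ≤ j → j ≤ n → t i ≤ t j)
    (A : ℝ) (hA : A = ∑ i ∈ Finset.Icc 1 n, y i * (t i - t (i - 1))) :
    (∑ i ∈ Finset.Icc 1 n,
        (t (i - 1) * y i * Real.log (t (i - 1) * y i)
          - t i * y i * Real.log (t i * y i)))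
      ≥ -A * Real.log A := by
  have h := Real.convexOn_mul_log.sub_map_sum_le_sum_sub_map n
    (fun i hi j hj hij => hy i j hi.1 hij hj.2)
    (fun i hi => hy0 i (mem_Icc.1 hi).1 (mem_Icc.1 hi).2) ht0
    (fun i _ j hj hij => ht i j hij hj)
  rw [← hA, zero_mul, zero_sub, ← neg_mul] at h
  exact h
end

section
/- Suppose y₁ ≥ y₂ ≥ ⋯ ≥ y_n > 0 and 0 = t₀ < a = t₁ ≤ t₂ ≤ ⋯ ≤ t_n = b. Let f be the step function whose value on [t_{i-1}, t_i) is y_i, let P = ∫₀^a f dx = y₁ a and Q = ∫_a^b f dx. Then -∫_a^b f(x) (1 + ln(x f(x))) dx ≥ P ln P - (P+Q) ln(P+Q). -/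
/-!
Write `φ u = u log u` and `S k = ∫_0^{t_k} f`. On `[t_k, t_{k+1}]` the integrand is
`y (1 + log (x y)) = d/dx φ (y x)` with `y = y_{k+1}`, so that piece contributes the increment of
`φ` from `y t_k` to `y t_{k+1}`, over an interval of length `d = y (t_{k+1} - t_k)`. Since `f` is
nonincreasing, `y_{k+1} t_k ≤ y_k t_k ≤ S k`, so by convexity of `φ` this increment is at most
`φ (S k + d) - φ (S k) = φ (S (k+1)) - φ (S k)`. Summing, the bound telescopes to
`φ (S n) - φ (S 1) = φ (P + Q) - φ P`.
-/

open MeasureTheory Set Real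

theorem ConvexOn.map_add_sub_map_le_of_le_s5 {s : Set ℝ} {φ : ℝ → ℝ} (hφ : ConvexOn ℝ s φ)
    {u v d : ℝ} (hu : u ∈ s) (hvd : v + d ∈ s) (huv : u ≤ v) (hd : 0 ≤ d) :
    φ (u + d) - φ u ≤ φ (v + d) - φ v := by
  rcases hd.eq_or_lt with rfl | hd
  · simp
  have hud : u + d ∈ s := hφ.1.ordConnected.out hu hvd ⟨by linarith, by linarith⟩
  have hv : v ∈ s := hφ.1.ordConnected.out hu hvd ⟨huv, by linarith⟩
  have h₁ :=
    hφ.secant_mono hu hud hvd (by linarith) (by linarith) (by linarith : u + d ≤ v + d)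
  have h₂ := hφ.secant_mono hvd hu hv (by linarith) (by linarith) huv
  rw [← neg_div_neg_eq, ← neg_div_neg_eq (φ v - _)] at h₂
  simp only [neg_sub, add_sub_cancel_left, sub_add_cancel_left, neg_neg] at h₁ h₂
  exact (div_le_div_iff_of_pos_right hd).1 (h₁.trans h₂)

theorem Real.mul_log_add_sub_le {u v d : ℝ} (hu : 0 ≤ u) (huv : u ≤ v) (hd : 0 ≤ d) :
    (u + d) * log (u + d) - u * log u ≤ (v + d) * log (v + d) - v * log v :=
  convexOn_mul_log.map_add_sub_map_le_of_le_s5 hu (mem_Ici.2 (by linarith)) huv hd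

theorem intervalIntegrable_mul_one_add_log_mul (y : ℝ) {s τ : ℝ} (hs : 0 < s) (hτ : 0 < τ) :
    IntervalIntegrable (fun x => y * (1 + log (x * y))) volume s τ := by
  rcases eq_or_ne y 0 with rfl | hy
  · simp
  refine ContinuousOn.intervalIntegrable fun x hx => ?_
  have hx : 0 < x := lt_of_lt_of_le (lt_min hs hτ) hx.1
  exact (continuousAt_const.mul (continuousAt_const.add
    ((continuousAt_id.mul continuousAt_const).log (mul_ne_zero hx.ne' hy)))).continuousWithinAt

theorem integral_mul_one_add_log_mul (y : ℝ) {s τ : ℝ} (hs : 0 < s) (hτ : 0 < τ) :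
    ∫ x in s..τ, y * (1 + log (x * y)) = y * τ * log (y * τ) - y * s * log (y * s) := by
  rcases eq_or_ne y 0 with rfl | hy
  · simp
  refine intervalIntegral.integral_eq_sub_of_hasDerivAt (f := fun x => y * x * log (y * x))
    (fun x hx => ?_) (intervalIntegrable_mul_one_add_log_mul y hs hτ)
  have hx : 0 < x := lt_of_lt_of_le (lt_min hs hτ) hx.1
  have h : HasDerivAt (fun x => y * x * log (y * x)) ((log (y * x) + 1) * y) x :=
    (hasDerivAt_mul_log (mul_ne_zero hy hx.ne')).comp x
      (by simpa using (hasDerivAt_id x).const_mul y)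
  exact h.congr_deriv (by rw [mul_comm x y]; ring)

theorem intervalIntegral.integral_eq_sum_of_eqOn_Ioo {E : Type*} [NormedAddCommGroup E]
    [NormedSpace ℝ E] {F : ℝ → E} {g : ℕ → ℝ → E} {t : ℕ → ℝ} {m n : ℕ} (hmn : m ≤ n)
    (ht : ∀ k ∈ Finset.Ico m n, t k ≤ t (k + 1))
    (hF : ∀ k ∈ Finset.Ico m n, EqOn F (g k) (Ioo (t k) (t (k + 1))))
    (hg : ∀ k ∈ Finset.Ico m n, IntervalIntegrable (g k) volume (t k) (t (k + 1))) :
    ∫ x in t m..t n, F x = ∑ k ∈ Finset.Ico m n, ∫ x in t k..t (k + 1), g k x := by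
  rw [← sum_integral_adjacent_intervals_Ico hmn]
  · exact Finset.sum_congr rfl fun k hk => integral_congr_Ioo_of_le (ht k hk) (hF k hk)
  · intro k hk
    replace hk : k ∈ Finset.Ico m n := Finset.mem_Ico.2 hk
    refine (hg k hk).congr_uIoo ?_
    rw [uIoo_of_le (ht k hk)]
    exact (hF k hk).symm

/-- The integral over `[t 0, t k]` of the step function with value `y (j + 1)` on
`[t j, t (j + 1))`. -/
def stepIntegral (y t : ℕ → ℝ) (k : ℕ) : ℝ :=
  ∑ j ∈ Finset.range k, y (j + 1) * (t (j + 1) - t j)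

theorem stepIntegral_succ (y t : ℕ → ℝ) (k : ℕ) :
    stepIntegral y t (k + 1) = stepIntegral y t k + y (k + 1) * (t (k + 1) - t k) :=
  Finset.sum_range_succ _ k

section StepFunction

variable {f : ℝ → ℝ} {y t : ℕ → ℝ} {m n k : ℕ}

theorem mul_sub_le_stepIntegral (hy : AntitoneOn y (Icc 1 n))
    (ht : MonotoneOn t (Iic n)) (hkn : k ≤ n) :
    y k * (t k - t 0) ≤ stepIntegral y t k := by
  rw [← Finset.sum_range_sub, Finset.mul_sum]
  refine Finset.sum_le_sum fun j hj => ?_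
  have hjk : j < k := Finset.mem_range.1 hj
  exact mul_le_mul_of_nonneg_right
    (hy ⟨by omega, by omega⟩ ⟨by omega, hkn⟩ (by omega))
    (sub_nonneg.2 (ht (by simp; omega) (by simp; omega) (by omega)))

theorem mul_log_step_le (hy : AntitoneOn y (Icc 1 n))
    (hy0 : ∀ i ∈ Icc 1 n, 0 ≤ y i) (ht : MonotoneOn t (Iic n)) (ht0 : t 0 = 0)
    (hk : 1 ≤ k) (hkn : k < n) :
    y (k + 1) * t (k + 1) * log (y (k + 1) * t (k + 1))
        - y (k + 1) * t k * log (y (k + 1) * t k)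
      ≤ stepIntegral y t (k + 1) * log (stepIntegral y t (k + 1))
        - stepIntegral y t k * log (stepIntegral y t k) := by
  have hyk : 0 ≤ y (k + 1) := hy0 _ ⟨by omega, hkn⟩
  have htk : t k ≤ t (k + 1) := ht (by simp; omega) (by simp; omega) (by omega)
  have htk0 : 0 ≤ t k := ht0 ▸ ht (by simp) (by simp; omega) (Nat.zero_le k)
  have hyS : y (k + 1) * t k ≤ stepIntegral y t k :=
    calc y (k + 1) * t k ≤ y k * t k :=
          mul_le_mul_of_nonneg_right (hy ⟨hk, by omega⟩ ⟨by omega, hkn⟩ (by omega)) htk0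
      _ ≤ stepIntegral y t k := by
          simpa [ht0] using mul_sub_le_stepIntegral hy ht hkn.le
  have key := mul_log_add_sub_le (mul_nonneg hyk htk0) hyS (mul_nonneg hyk (sub_nonneg.2 htk))
  rwa [← stepIntegral_succ, ← mul_add, add_sub_cancel] at key

theorem sum_mul_log_step_le (hn : 1 ≤ n) (hy : AntitoneOn y (Icc 1 n))
    (hy0 : ∀ i ∈ Icc 1 n, 0 ≤ y i) (ht : MonotoneOn t (Iic n)) (ht0 : t 0 = 0) :
    ∑ k ∈ Finset.Ico 1 n,
        (y (k + 1) * t (k + 1) * log (y (k + 1) * t (k + 1))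
          - y (k + 1) * t k * log (y (k + 1) * t k))
      ≤ stepIntegral y t n * log (stepIntegral y t n)
        - stepIntegral y t 1 * log (stepIntegral y t 1) := by
  rw [← Finset.sum_Ico_sub (fun k => stepIntegral y t k * log (stepIntegral y t k)) hn]
  refine Finset.sum_le_sum fun k hk => ?_
  obtain ⟨hk1, hkn⟩ := Finset.mem_Ico.1 hk
  exact mul_log_step_le hy hy0 ht ht0 hk1 hkn

theorem integral_step_eq_stepIntegral_sub (hmn : m ≤ n)
    (ht : ∀ k ∈ Finset.Ico m n, t k ≤ t (k + 1))
    (hf : ∀ k ∈ Finset.Ico m n, EqOn f (fun _ => y (k + 1)) (Ioo (t k) (t (k + 1)))) :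
    ∫ x in t m..t n, f x = stepIntegral y t n - stepIntegral y t m := by
  rw [intervalIntegral.integral_eq_sum_of_eqOn_Ioo hmn ht hf fun _ _ => intervalIntegrable_const,
    stepIntegral, stepIntegral, ← Finset.sum_Ico_eq_sub _ hmn]
  simp [mul_comm]

theorem integral_step_mul_one_add_log_mul (hmn : m ≤ n)
    (ht : ∀ k ∈ Finset.Ico m n, t k ≤ t (k + 1)) (htpos : ∀ k ∈ Finset.Ico m n, 0 < t k)
    (hf : ∀ k ∈ Finset.Ico m n, EqOn f (fun _ => y (k + 1)) (Ioo (t k) (t (k + 1)))) :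
    ∫ x in t m..t n, f x * (1 + log (x * f x)) = ∑ k ∈ Finset.Ico m n,
      (y (k + 1) * t (k + 1) * log (y (k + 1) * t (k + 1))
        - y (k + 1) * t k * log (y (k + 1) * t k)) := by
  have htpos' : ∀ k ∈ Finset.Ico m n, 0 < t (k + 1) := fun k hk =>
    (htpos k hk).trans_le (ht k hk)
  rw [intervalIntegral.integral_eq_sum_of_eqOn_Ioo hmn ht
    (F := fun x => f x * (1 + log (x * f x)))
    (g := fun k x => y (k + 1) * (1 + log (x * y (k + 1))))
    (fun k hk x hx => by simp only [hf k hk hx])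
    (fun k hk => intervalIntegrable_mul_one_add_log_mul _ (htpos k hk) (htpos' k hk))]
  exact Finset.sum_congr rfl fun k hk =>
    integral_mul_one_add_log_mul _ (htpos k hk) (htpos' k hk)

end StepFunction

/-- Let `y₁ ≥ ⋯ ≥ y_n > 0` and `0 = t₀ < a = t₁ ≤ t₂ ≤ ⋯ ≤ t_n = b`,
let `f` be the step function with value `y_i` on `[t_{i-1}, t_i)`, let
`P = ∫₀^a f = y₁ a` and `Q = ∫_a^b f`.  Then
`-∫_a^b f(x)(1 + ln(x f(x))) dx ≥ P ln P - (P+Q) ln(P+Q)`. -/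
theorem step_integral_log_inequality (n : ℕ) (hn : 1 ≤ n) (y t : ℕ → ℝ)
    (hy : ∀ i j, 1 ≤ i → i ≤ j → j ≤ n → y j ≤ y i)
    (hypos : ∀ i, 1 ≤ i → i ≤ n → 0 < y i)
    (ht0 : t 0 = 0) (ht1 : 0 < t 1)
    (htmono : ∀ i j, 1 ≤ i → i ≤ j → j ≤ n → t i ≤ t j)
    (f : ℝ → ℝ)
    (hf : ∀ i, 1 ≤ i → i ≤ n → ∀ x ∈ Set.Ico (t (i - 1)) (t i), f x = y i)
    (a b P Q : ℝ) (ha : a = t 1) (hb : b = t n)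
    (hP : P = y 1 * a) (hQ : Q = ∫ x in a..b, f x) :
    (-∫ x in a..b, f x * (1 + Real.log (x * f x)))
      ≥ P * Real.log P - (P + Q) * Real.log (P + Q) := by
  subst ha hb hP hQ
  have ht : MonotoneOn t (Iic n) := by
    intro i hi j hj hij
    rcases Nat.eq_zero_or_pos i with rfl | hi0
    · rcases Nat.eq_zero_or_pos j with rfl | hj0
      · rfl
      · linarith [htmono 1 j le_rfl hj0 hj]
    · exact htmono i j hi0 hij hj
  have hstep : ∀ k ∈ Finset.Ico 1 n, t k ≤ t (k + 1) := fun k hk =>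
    ht (by simp at hk ⊢; omega) (by simp at hk ⊢; omega) k.le_succ
  have htpos : ∀ k ∈ Finset.Ico 1 n, 0 < t k := fun k hk =>
    ht1.trans_le (htmono 1 k le_rfl (by simp at hk; omega) (by simp at hk; omega))
  have hpiece : ∀ k ∈ Finset.Ico 1 n, EqOn f (fun _ => y (k + 1)) (Ioo (t k) (t (k + 1))) :=
    fun k hk x hx => hf (k + 1) (by omega) (by simp at hk; omega) x (Ioo_subset_Ico_self hx)
  have hP : y 1 * t 1 = stepIntegral y t 1 := by simp [stepIntegral, ht0]
  rw [ge_iff_le, integral_step_mul_one_add_log_mul hn hstep htpos hpiece,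
    integral_step_eq_stepIntegral_sub hn hstep hpiece, hP, add_sub_cancel]
  linarith [sum_mul_log_step_le hn (fun i hi j hj hij => hy i j hi.1 hij hj.2)
    (fun i hi => (hypos i hi.1 hi.2).le) ht ht0]
end

section
/- Let f be a positive monotone decreasing function on [a,b] where 0 < a < b. Let P = a·f(a) and Q = ∫_a^b f dx. Then -∫_a^b f(x)(1 + ln(x f(x))) dx ≥ P ln P - (P+Q) ln(P+Q). -/
/-!
Put `F x = a f(a) + ∫_a^x f`. Since `f` decreases and `a > 0`,
`x f(x) = a f(x) + (x - a) f(x) ≤ a f(a) + ∫_a^x f = F x`, so the integrand is at most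
`f(x) (1 + log F(x))`. That is the derivative of `F log F` at every point where `f` is continuous,
hence off a countable set, so its integral is `F(b) log F(b) - F(a) log F(a)`, which is
`(P + Q) log (P + Q) - P log P`.
-/

open MeasureTheory Set Filter Topology Real

section

variable {f : ℝ → ℝ} {a b : ℝ}

theorem AntitoneOn.intervalIntegrable_of_mem (hf : AntitoneOn f (Icc a b)) {x y : ℝ}
    (hx : x ∈ Icc a b) (hy : y ∈ Icc a b) : IntervalIntegrable f volume x y :=
  (hf.mono (uIcc_subset_Icc hx hy)).intervalIntegrable

theorem AntitoneOn.exists_countable_hasDerivAt_integral (hf : AntitoneOn f (Icc a b)) :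
    ∃ s : Set ℝ, s.Countable ∧
      ∀ x ∈ Ioo a b \ s, HasDerivAt (fun u => ∫ t in a..u, f t) (f x) x := by
  refine ⟨_, hf.countable_not_continuousWithinAt, fun x ⟨hx, hcont⟩ => ?_⟩
  have hab : a ≤ b := (hx.1.trans hx.2).le
  have hIcc : Icc a b ∈ 𝓝 x := Icc_mem_nhds hx.1 hx.2
  have hint : IntegrableOn f (Icc a b) := (intervalIntegrable_iff_integrableOn_Icc_of_le hab).1
    (hf.intervalIntegrable_of_mem (left_mem_Icc.2 hab) (right_mem_Icc.2 hab))
  refine intervalIntegral.integral_hasDerivAt_right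
    (hf.intervalIntegrable_of_mem (left_mem_Icc.2 hab) (Ioo_subset_Icc_self hx))
    ⟨Icc a b, hIcc, hint.aestronglyMeasurable⟩ ?_
  by_contra hdisc
  exact hcont ⟨Ioo_subset_Icc_self hx, fun hc => hdisc (hc.continuousAt hIcc)⟩

theorem AntitoneOn.mul_le_add_integral (hf : AntitoneOn f (Icc a b)) (ha : 0 ≤ a) {x : ℝ}
    (hx : x ∈ Icc a b) : x * f x ≤ a * f a + ∫ t in a..x, f t := by
  have haI : a ∈ Icc a b := left_mem_Icc.2 (hx.1.trans hx.2)
  have hleft : a * f x ≤ a * f a := mul_le_mul_of_nonneg_left (hf haI hx hx.1) ha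
  have hint : (x - a) * f x ≤ ∫ t in a..x, f t := by
    simpa using intervalIntegral.integral_mono_on hx.1 intervalIntegrable_const
      (hf.intervalIntegrable_of_mem haI hx) (fun t ht => hf ⟨ht.1, ht.2.trans hx.2⟩ hx ht.2)
  linarith

theorem AntitoneOn.intervalIntegrable_comp (hf : AntitoneOn f (Icc a b)) (hab : a ≤ b)
    {g : ℝ → ℝ → ℝ} (hgm : Measurable (Function.uncurry g))
    (hgc : ContinuousOn (Function.uncurry g) (Icc a b ×ˢ Icc (f b) (f a))) :
    IntervalIntegrable (fun x => g x (f x)) volume a b := by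
  have hf_int : IntegrableOn f (Icc a b) := (intervalIntegrable_iff_integrableOn_Icc_of_le hab).1
    (hf.intervalIntegrable_of_mem (left_mem_Icc.2 hab) (right_mem_Icc.2 hab))
  obtain ⟨C, hC⟩ := (isCompact_Icc.prod isCompact_Icc).exists_bound_of_continuousOn hgc
  rw [intervalIntegrable_iff_integrableOn_Icc_of_le hab]
  refine IntegrableOn.of_bound measure_Icc_lt_top
    (hgm.comp_aemeasurable (aemeasurable_id.prodMk hf_int.aemeasurable)).aestronglyMeasurable C
    ((ae_restrict_iff' measurableSet_Icc).2 (ae_of_all _ fun x hx => hC (x, f x) ⟨hx, ?_⟩))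
  exact ⟨hf hx (right_mem_Icc.2 hab) hx.2, hf (left_mem_Icc.2 hab) hx hx.1⟩

theorem AntitoneOn.continuousOn_integral (hf : AntitoneOn f (Icc a b)) (hab : a ≤ b) :
    ContinuousOn (fun x => ∫ t in a..x, f t) (Icc a b) := by
  simpa only [uIcc_of_le hab] using intervalIntegral.continuousOn_primitive_interval'
    (hf.intervalIntegrable_of_mem (left_mem_Icc.2 hab) (right_mem_Icc.2 hab)) left_mem_uIcc

theorem AntitoneOn.intervalIntegrable_mul_one_add_log_add_integral (hf : AntitoneOn f (Icc a b))
    (hab : a ≤ b) {c : ℝ} (hpos : ∀ x ∈ Icc a b, 0 < c + ∫ t in a..x, f t) :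
    IntervalIntegrable (fun x => f x * (1 + log (c + ∫ t in a..x, f t))) volume a b := by
  refine (hf.intervalIntegrable_of_mem (left_mem_Icc.2 hab) (right_mem_Icc.2 hab)).mul_continuousOn
    ?_
  rw [uIcc_of_le hab]
  exact continuousOn_const.add
    ((continuousOn_const.add (hf.continuousOn_integral hab)).log fun x hx => (hpos x hx).ne')

theorem AntitoneOn.integral_mul_one_add_log_add_integral (hf : AntitoneOn f (Icc a b))
    (hab : a ≤ b) {c : ℝ} (hpos : ∀ x ∈ Icc a b, 0 < c + ∫ t in a..x, f t) :
    ∫ x in a..b, f x * (1 + log (c + ∫ t in a..x, f t)) =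
      (c + ∫ t in a..b, f t) * log (c + ∫ t in a..b, f t) - c * log c := by
  obtain ⟨s, hs, hderiv⟩ := hf.exists_countable_hasDerivAt_integral
  have := integral_eq_of_hasDerivAt_off_countable_of_le
    (fun x => (c + ∫ t in a..x, f t) * log (c + ∫ t in a..x, f t))
    (fun x => f x * (1 + log (c + ∫ t in a..x, f t))) hab hs
    (continuous_mul_log.comp_continuousOn (continuousOn_const.add (hf.continuousOn_integral hab)))
    (fun x hx => ?_) (hf.intervalIntegrable_mul_one_add_log_add_integral hab hpos)
  · simpa using this
  refine ((hasDerivAt_mul_log (hpos x (Ioo_subset_Icc_self hx.1)).ne').comp x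
    ((hderiv x hx).const_add c)).congr_deriv ?_
  ring

end

/-- Let `f` be a positive monotone decreasing function on `[a,b]` with
`0 < a < b`, and let `P = a f(a)`, `Q = ∫_a^b f`.  Then
`-∫_a^b f(x)(1 + ln(x f(x))) dx ≥ P ln P - (P+Q) ln(P+Q)`. -/
theorem antitone_integral_log_inequality (a b : ℝ) (ha : 0 < a) (hab : a < b)
    (f : ℝ → ℝ) (hpos : ∀ x ∈ Set.Icc a b, 0 < f x)
    (hmono : AntitoneOn f (Set.Icc a b))
    (P Q : ℝ) (hP : P = a * f a) (hQ : Q = ∫ x in a..b, f x) :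
    (-∫ x in a..b, f x * (1 + Real.log (x * f x)))
      ≥ P * Real.log P - (P + Q) * Real.log (P + Q) := by
  subst hP hQ
  have hle : ∀ x ∈ Icc a b, x * f x ≤ a * f a + ∫ t in a..x, f t :=
    fun x hx => hmono.mul_le_add_integral ha.le hx
  have hxf_pos : ∀ x ∈ Icc a b, 0 < x * f x :=
    fun x hx => mul_pos (ha.trans_le hx.1) (hpos x hx)
  have hF_pos : ∀ x ∈ Icc a b, 0 < a * f a + ∫ t in a..x, f t :=
    fun x hx => (hxf_pos x hx).trans_le (hle x hx)
  have hlhs_int : IntervalIntegrable (fun x => f x * (1 + log (x * f x))) volume a b := by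
    refine hmono.intervalIntegrable_comp hab.le (g := fun x y => y * (1 + log (x * y)))
      (by fun_prop) (continuousOn_snd.mul (continuousOn_const.add
        ((continuousOn_fst.mul continuousOn_snd).log ?_)))
    rintro ⟨x, y⟩ ⟨hx, hy⟩
    exact (mul_pos (ha.trans_le hx.1) ((hpos b (right_mem_Icc.2 hab.le)).trans_le hy.1)).ne'
  have hbound : ∫ x in a..b, f x * (1 + log (x * f x)) ≤
      ∫ x in a..b, f x * (1 + log (a * f a + ∫ t in a..x, f t)) :=
    intervalIntegral.integral_mono_on hab.le hlhs_int
      (hmono.intervalIntegrable_mul_one_add_log_add_integral hab.le hF_pos) fun x hx =>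
        mul_le_mul_of_nonneg_left (add_le_add_right (log_le_log (hxf_pos x hx) (hle x hx)) 1)
          (hpos x hx).le
  rw [hmono.integral_mul_one_add_log_add_integral hab.le hF_pos] at hbound
  linarith
end

section
/- Let f be a positive monotone decreasing function on (0,b] (b > 0) for which Q = ∫₀^b f dx is finite. Then -∫₀^b f(x)(1 + ln(x f(x))) dx ≥ -Q ln Q. -/
/-! Write `F u = ∫₀ᵘ f`. Since `f` is decreasing, `x f(x) ≤ F(x)`, so the integrand
`f (1 + log (x f))` is at most `f (1 + log F)`, the derivative of `F log F`; integrating gives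
`∫₀ᵇ f (1 + log (x f)) ≤ Q log Q - 0`. As `f` need not be continuous, the derivative is taken from
the right: `F` has right derivative `f(x⁺)` at every `x ∈ (0, b)`, and `f(x⁺) = f(x)` off the
countably many discontinuities of `f`, which is all the right-derivative form of the fundamental
theorem of calculus needs. -/

open MeasureTheory Set Filter Topology Function Real

namespace intervalIntegral

theorem integral_le_sub_of_hasDeriv_right_of_ae_le {g g' φ : ℝ → ℝ} {a b : ℝ} (hab : a ≤ b)
    (hcont : ContinuousOn g (Icc a b))
    (hderiv : ∀ x ∈ Ioo a b, HasDerivWithinAt g (g' x) (Ioi x) x)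
    (φint : IntegrableOn φ (Icc a b)) (hφg : ∀ᵐ x, x ∈ Ioo a b → φ x ≤ g' x) :
    ∫ y in a..b, φ y ≤ g b - g a := by
  -- `min φ g'` agrees with `φ` a.e. and lies below `g'` everywhere.
  have hmin : φ =ᵐ[volume.restrict (Ioo a b)] fun x => min (φ x) (g' x) := by
    filter_upwards [ae_restrict_of_ae hφg, ae_restrict_mem measurableSet_Ioo] with x hx hmem
    exact (min_eq_left (hx hmem)).symm
  calc ∫ y in a..b, φ y = ∫ y in a..b, min (φ y) (g' y) := by
        simp only [integral_of_le hab, integral_Ioc_eq_integral_Ioo]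
        exact MeasureTheory.integral_congr_ae hmin
    _ ≤ g b - g a := by
      refine integral_le_sub_of_hasDeriv_right_of_le hab hcont hderiv ?_ fun x _ => min_le_right _ _
      rw [integrableOn_Icc_iff_integrableOn_Ioo] at φint ⊢
      exact φint.congr hmin

end intervalIntegral

namespace AntitoneOn

variable {f : ℝ → ℝ} {a b x : ℝ}

theorem sub_mul_le_integral (hf : AntitoneOn f (Ioc a x)) (hint : IntegrableOn f (Ioc a x))
    (hax : a ≤ x) : (x - a) * f x ≤ ∫ t in a..x, f t := by
  calc (x - a) * f x = ∫ _ in a..x, f x := by simp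
    _ ≤ ∫ t in a..x, f t :=
      intervalIntegral.integral_mono_on_of_le_Ioo hax intervalIntegrable_const
        ((intervalIntegrable_iff_integrableOn_Ioc_of_le hax).2 hint) fun t ht =>
          hf (Ioo_subset_Ioc_self ht) (right_mem_Ioc.2 (ht.1.trans ht.2)) ht.2.le

theorem tendsto_rightLim (hf : AntitoneOn f (Ioo a b)) (hx : x ∈ Ioo a b) :
    Tendsto f (𝓝[>] x) (𝓝 (rightLim f x)) := by
  have hsub : Ioo x b ⊆ Ioo a b := Ioo_subset_Ioo_left hx.1.le
  have hbdd : BddAbove (f '' Ioo x b) :=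
    ⟨f x, forall_mem_image.2 fun t ht => hf hx (hsub ht) ht.1.le⟩
  have h := (hf.mono hsub).tendsto_nhdsWithin_Ioo_right (nonempty_Ioo.2 hx.2) hbdd
  rwa [rightLim_eq_of_tendsto h]

theorem ae_rightLim_eq (hf : AntitoneOn f (Ioo a b)) :
    ∀ᵐ x, x ∈ Ioo a b → rightLim f x = f x := by
  filter_upwards [hf.countable_not_continuousWithinAt.ae_notMem volume] with x hx hmem
  have hcont : ContinuousAt f x := by
    by_contra h
    exact hx ⟨hmem, fun h' => h (h'.continuousAt (isOpen_Ioo.mem_nhds hmem))⟩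
  exact hcont.continuousWithinAt.rightLim_eq

theorem hasDerivWithinAt_integral_Ioi (hf : AntitoneOn f (Ioo a b))
    (hint : IntegrableOn f (Ioc a b)) (hx : x ∈ Ioo a b) :
    HasDerivWithinAt (fun u => ∫ t in a..u, f t) (rightLim f x) (Ioi x) x := by
  refine (intervalIntegral.integral_hasDerivWithinAt_of_tendsto_ae_right ?_ ?_
    ((hf.tendsto_rightLim hx).mono_left inf_le_left) (s := Ici x)).mono Ioi_subset_Ici_self
  · exact (intervalIntegrable_iff_integrableOn_Ioc_of_le hx.1.le).2
      (hint.mono_set (Ioc_subset_Ioc_right hx.2.le))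
  · exact ⟨Ioo a b, nhdsWithin_le_nhds (isOpen_Ioo.mem_nhds hx),
      (hint.mono_set Ioo_subset_Ioc_self).aestronglyMeasurable⟩

end AntitoneOn

/-- Let `f` be a positive monotone decreasing function on `(0,b]` for which
`Q = ∫₀^b f dx` is finite (and for which the entropy integral exists).  Then
`-∫₀^b f(x)(1 + ln(x f(x))) dx ≥ -Q ln Q`. -/
theorem antitone_integral_log_inequality_zero (b : ℝ) (hb : 0 < b) (f : ℝ → ℝ)
    (hpos : ∀ x ∈ Set.Ioc (0:ℝ) b, 0 < f x)
    (hmono : AntitoneOn f (Set.Ioc (0:ℝ) b))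
    (hint : IntegrableOn f (Set.Ioc (0:ℝ) b))
    (hint2 : IntegrableOn (fun x => f x * (1 + Real.log (x * f x))) (Set.Ioc (0:ℝ) b))
    (Q : ℝ) (hQ : Q = ∫ x in Set.Ioc (0:ℝ) b, f x) :
    (-∫ x in Set.Ioc (0:ℝ) b, f x * (1 + Real.log (x * f x)))
      ≥ -Q * Real.log Q := by
  set F : ℝ → ℝ := fun u => ∫ t in (0:ℝ)..u, f t
  have hf : AntitoneOn f (Ioo 0 b) := hmono.mono Ioo_subset_Ioc_self
  have hfi : IntervalIntegrable f volume 0 b :=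
    (intervalIntegrable_iff_integrableOn_Ioc_of_le hb.le).2 hint
  have hxf_le : ∀ x ∈ Ioo 0 b, x * f x ≤ F x := fun x hx => by
    simpa using (hmono.mono (Ioc_subset_Ioc_right hx.2.le)).sub_mul_le_integral
      (hint.mono_set (Ioc_subset_Ioc_right hx.2.le)) hx.1.le
  have hxf_pos : ∀ x ∈ Ioo 0 b, 0 < x * f x := fun x hx =>
    mul_pos hx.1 (hpos x (Ioo_subset_Ioc_self hx))
  have hFcont : ContinuousOn F (Icc 0 b) := by
    simpa [uIcc_of_le hb.le] using
      intervalIntegral.continuousOn_primitive_interval' hfi left_mem_uIcc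
  have key : ∫ x in (0:ℝ)..b, f x * (1 + log (x * f x)) ≤ F b * log (F b) - F 0 * log (F 0) := by
    refine intervalIntegral.integral_le_sub_of_hasDeriv_right_of_ae_le
      (g' := fun x => (log (F x) + 1) * rightLim f x) hb.le
      (continuous_mul_log.comp_continuousOn hFcont) (fun x hx => ?_)
      ((integrableOn_Icc_iff_integrableOn_Ioc (μ := volume)).2 hint2) ?_
    · exact (hasDerivAt_mul_log ((hxf_pos x hx).trans_le (hxf_le x hx)).ne').comp_hasDerivWithinAt
        x (hf.hasDerivWithinAt_integral_Ioi hint hx)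
    · filter_upwards [hf.ae_rightLim_eq] with x hlim hmem
      calc f x * (1 + log (x * f x)) ≤ f x * (1 + log (F x)) := by
            have hfx := hpos x (Ioo_subset_Ioc_self hmem)
            gcongr
            exacts [hxf_pos x hmem, hxf_le x hmem]
        _ = (log (F x) + 1) * rightLim f x := by rw [hlim hmem]; ring
  have hFb : F b = Q := hQ ▸ intervalIntegral.integral_of_le hb.le
  rw [intervalIntegral.integral_of_le hb.le, hFb] at key
  simp only [F, intervalIntegral.integral_same, zero_mul, sub_zero] at key
  linarith
end

section
/- (The Genial Entropy Inequality) For any corner density f : I → [0,∞), one has -1 - ∫_I f(x) ln(x f(x)) dx ≥ 0; that is, the genial entropy of any corner density is nonnegative. -/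
open MeasureTheory

/-!
Let `F` be the distribution function of the probability measure `f dx` on `I`. Since `f` is
decreasing, `x f(x) ≤ ∫_0^x f = F(x)`, so `-∫ f ln(x f) ≥ ∫ f (-ln F)`. As `F` is continuous,
it pushes `f dx` forward to the uniform distribution on `(0,1]`, hence
`∫ f (-ln F) = ∫_0^1 -ln u du = 1`.
-/

open ProbabilityTheory Set Real

lemma lintegral_neg_log_Ioc_zero_one :
    ∫⁻ u in Ioc (0 : ℝ) 1, ENNReal.ofReal (-log u) = 1 := by
  have hint : IntegrableOn (fun u => -log u) (Ioc 0 1) :=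
    (intervalIntegral.intervalIntegrable_log'.neg).1
  have hnonneg : 0 ≤ᵐ[volume.restrict (Ioc 0 1)] fun u => -log u :=
    ae_restrict_of_forall_mem measurableSet_Ioc fun u hu =>
      neg_nonneg.2 (log_nonpos hu.1.le hu.2)
  rw [← ofReal_integral_eq_lintegral_ofReal hint hnonneg,
    ← intervalIntegral.integral_of_le zero_le_one, intervalIntegral.integral_neg, integral_log]
  simp

lemma Monotone.exists_setOf_le_eq_Iic {α β : Type*} [ConditionallyCompleteLinearOrder α]
    [TopologicalSpace α] [OrderTopology α] [DenselyOrdered α] [LinearOrder β]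
    [TopologicalSpace β] [OrderClosedTopology β] {F : α → β} (hmono : Monotone F)
    (hcont : Continuous F) {t : β} (hlo : ∃ a, F a ≤ t) (hhi : ∃ b, t < F b) :
    ∃ c, F c = t ∧ {x | F x ≤ t} = Iic c := by
  obtain ⟨a, ha⟩ := hlo
  obtain ⟨b, hb⟩ := hhi
  have hbdd : BddAbove {x | F x ≤ t} := ⟨b, fun x hx => (hmono.reflect_lt (hx.trans_lt hb)).le⟩
  set c := sSup {x | F x ≤ t}
  have hc : F c ≤ t := (isClosed_le hcont continuous_const).csSup_mem ⟨a, ha⟩ hbdd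
  have hcb : c ≤ b := (hmono.reflect_lt (hc.trans_lt hb)).le
  obtain ⟨y, hy, hFy⟩ := intermediate_value_Icc hcb hcont.continuousOn ⟨hc, hb.le⟩
  have hyc : y = c := le_antisymm (le_csSup hbdd hFy.le) hy.1
  exact ⟨c, hyc ▸ hFy,
    Subset.antisymm (fun x hx => le_csSup hbdd hx) fun x hx => (hmono hx).trans hc⟩

section cdf

variable (μ : Measure ℝ) [IsProbabilityMeasure μ] [NullSingletonClass μ]

lemma continuous_cdf : Continuous (cdf μ) := by
  refine continuous_iff_continuousAt.2 fun x => ?_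
  rw [(monotone_cdf μ).continuousAt_iff_leftLim_eq_rightLim, StieltjesFunction.rightLim_eq]
  have hatom := (cdf μ).measure_singleton x
  rw [measure_cdf, measure_singleton, eq_comm, ENNReal.ofReal_eq_zero, sub_nonpos] at hatom
  exact le_antisymm ((monotone_cdf μ).leftLim_le le_rfl) hatom

lemma measure_setOf_cdf_le {t : ℝ} (ht₀ : 0 ≤ t) (ht₁ : t < 1) :
    μ {x | cdf μ x ≤ t} = ENNReal.ofReal t := by
  rcases eq_empty_or_nonempty {x | cdf μ x ≤ t} with hempty | hne
  · have ht : t = 0 := by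
      refine le_antisymm (not_lt.1 fun ht => ?_) ht₀
      obtain ⟨a, ha⟩ := ((tendsto_cdf_atBot μ).eventually (eventually_lt_nhds ht)).exists
      exact hempty.subset ha.le
    rw [hempty, ht, measure_empty, ENNReal.ofReal_zero]
  · obtain ⟨c, hc, hIic⟩ := (monotone_cdf μ).exists_setOf_le_eq_Iic (continuous_cdf μ) hne
      ((tendsto_cdf_atTop μ).eventually (eventually_gt_nhds ht₁)).exists
    rw [hIic, ← ofReal_cdf, hc]

theorem map_cdf_eq_volume_restrict_Ioc : μ.map (cdf μ) = volume.restrict (Ioc 0 1) := by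
  refine Measure.ext_of_Iic _ _ fun t => ?_
  rw [Measure.map_apply (monotone_cdf μ).measurable measurableSet_Iic,
    Measure.restrict_apply measurableSet_Iic]
  rcases lt_or_ge t 0 with ht₀ | ht₀
  · have hempty : cdf μ ⁻¹' Iic t = ∅ :=
      eq_empty_of_forall_notMem fun x hx => (ht₀.trans_le (cdf_nonneg μ x)).not_ge hx
    rw [hempty, Iic_inter_Ioc_of_le (ht₀.le.trans zero_le_one), Ioc_eq_empty ht₀.not_gt]
    simp
  rcases lt_or_ge t 1 with ht₁ | ht₁
  · rw [Iic_inter_Ioc_of_le ht₁.le, Real.volume_Ioc, sub_zero]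
    exact measure_setOf_cdf_le μ ht₀ ht₁
  · have huniv : cdf μ ⁻¹' Iic t = univ :=
      eq_univ_of_forall fun x => (cdf_le_one μ x).trans ht₁
    rw [huniv, inter_eq_right.2 (Ioc_subset_Iic_self.trans (Iic_subset_Iic.2 ht₁))]
    simp

theorem lintegral_neg_log_cdf : ∫⁻ x, ENNReal.ofReal (-log (cdf μ x)) ∂μ = 1 := by
  rw [← lintegral_neg_log_Ioc_zero_one, ← map_cdf_eq_volume_restrict_Ioc μ,
    lintegral_map (by fun_prop) (monotone_cdf μ).measurable]

end cdf

lemma mul_log_mul_le_mul_log {a x c : ℝ} (ha : 0 ≤ a) (hx : 0 < x) (h : x * a ≤ c) :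
    a * log (x * a) ≤ a * log c := by
  rcases ha.eq_or_lt with rfl | ha
  · simp
  · exact mul_le_mul_of_nonneg_left (log_le_log (by positivity) h) ha.le

noncomputable def cornerMeasure (I : Set ℝ) (f : ℝ → ℝ) : Measure ℝ :=
  (volume.restrict I).withDensity fun x => ENNReal.ofReal (f x)

instance (I : Set ℝ) (f : ℝ → ℝ) : NullSingletonClass (cornerMeasure I f) := by
  unfold cornerMeasure; infer_instance

namespace IsCornerDensity

variable {I : Set ℝ} {f : ℝ → ℝ}

lemma Ioc_subset (hf : IsCornerDensity I f) {x : ℝ} (hx : x ∈ I) : Ioc 0 x ⊆ I := fun _ ht =>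
  (hf.2.1.out (Or.inr rfl) (Or.inl hx) (Ioc_subset_Icc_self ht)).resolve_right ht.1.ne'

lemma ordConnected (hf : IsCornerDensity I f) : I.OrdConnected := by
  refine ⟨fun x hx y hy t ht => ?_⟩
  rcases (mem_Ici.1 (hf.1 hx)).eq_or_lt with rfl | hx₀
  · rcases ht.1.eq_or_lt with rfl | hxt
    · exact hx
    · exact hf.Ioc_subset hy ⟨hxt, ht.2⟩
  · exact hf.Ioc_subset hy ⟨hx₀.trans_le ht.1, ht.2⟩

lemma integrableOn (hf : IsCornerDensity I f) : IntegrableOn f I := by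
  by_contra h
  have hone := hf.2.2.2.2
  rw [integral_undef h] at hone
  exact zero_ne_one hone

lemma isProbabilityMeasure (hf : IsCornerDensity I f) :
    IsProbabilityMeasure (cornerMeasure I f) := by
  have ⟨_, _, hf₀, _, hone⟩ := hf
  constructor
  rw [cornerMeasure, withDensity_apply _ MeasurableSet.univ, Measure.restrict_univ,
    ← ofReal_integral_eq_lintegral_ofReal hf.integrableOn
      (ae_restrict_of_forall_mem hf.ordConnected.measurableSet hf₀), hone, ENNReal.ofReal_one]

lemma mul_le_cdf (hf : IsCornerDensity I f) {x : ℝ} (hx : x ∈ I) :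
    x * f x ≤ cdf (cornerMeasure I f) x := by
  have ⟨_, _, hf₀, hanti, _⟩ := hf
  have := hf.isProbabilityMeasure
  rw [← ENNReal.ofReal_le_ofReal_iff (cdf_nonneg _ x), ofReal_cdf]
  calc ENNReal.ofReal (x * f x) = ∫⁻ _ in Ioc 0 x, ENNReal.ofReal (f x) := by
        rw [setLIntegral_const, Real.volume_Ioc, sub_zero, ← ENNReal.ofReal_mul (hf₀ x hx),
          mul_comm]
    _ ≤ ∫⁻ t in Ioc 0 x, ENNReal.ofReal (f t) :=
        setLIntegral_mono' measurableSet_Ioc fun t ht =>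
          ENNReal.ofReal_le_ofReal (hanti (hf.Ioc_subset hx ht) hx ht.2)
    _ = cornerMeasure I f (Ioc 0 x) := by
        rw [cornerMeasure, withDensity_apply _ measurableSet_Ioc,
          Measure.restrict_restrict measurableSet_Ioc, inter_eq_left.2 (hf.Ioc_subset hx)]
    _ ≤ cornerMeasure I f (Iic x) := measure_mono Ioc_subset_Iic_self

lemma mul_log_mul_nonpos (hf : IsCornerDensity I f) {x : ℝ} (hx : x ∈ I) :
    f x * log (x * f x) ≤ 0 :=
  mul_nonpos_of_nonneg_of_nonpos (hf.2.2.1 x hx) <| log_nonpos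
    (mul_nonneg (hf.1 hx) (hf.2.2.1 x hx)) ((hf.mul_le_cdf hx).trans (cdf_le_one _ x))

lemma one_le_lintegral_neg_mul_log (hf : IsCornerDensity I f) :
    1 ≤ ∫⁻ x in I, ENNReal.ofReal (-(f x * log (x * f x))) := by
  set μ := cornerMeasure I f
  have := hf.isProbabilityMeasure
  have ⟨hI₀, _, hf₀, _⟩ := hf
  -- `x ≠ 0` is needed because `log 0 = 0`; the point `0` is null, so it is dropped a.e. below.
  have hcompare (x : ℝ) (hx : x ∈ I) (hx₀ : x ≠ 0) :
      ENNReal.ofReal (f x) * ENNReal.ofReal (-log (cdf μ x)) ≤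
        ENNReal.ofReal (-(f x * log (x * f x))) := by
    rw [← ENNReal.ofReal_mul (hf₀ x hx)]
    refine ENNReal.ofReal_le_ofReal ?_
    have := mul_log_mul_le_mul_log (hf₀ x hx) ((hI₀ hx).lt_of_ne' hx₀) (hf.mul_le_cdf hx)
    linarith
  calc 1 = ∫⁻ x, ENNReal.ofReal (-log (cdf μ x)) ∂μ := (lintegral_neg_log_cdf μ).symm
    _ = ∫⁻ x in I, ENNReal.ofReal (f x) * ENNReal.ofReal (-log (cdf μ x)) :=
      lintegral_withDensity_eq_lintegral_mul₀ hf.integrableOn.aemeasurable.ennreal_ofReal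
        (monotone_cdf μ).measurable.log.neg.ennreal_ofReal.aemeasurable
    _ ≤ _ := lintegral_mono_ae <| by
      filter_upwards [ae_restrict_mem hf.ordConnected.measurableSet,
        (volume.restrict I).ae_ne 0] with x hx hx₀
      exact hcompare x hx hx₀

end IsCornerDensity

/-- The Genial Entropy Inequality.  For any corner density
`f : I → [0,∞)` (whose genial entropy integral exists),
`-1 - ∫_I f(x) ln(x f(x)) dx ≥ 0`. -/
theorem genialEntropy_nonneg (I : Set ℝ) (f : ℝ → ℝ) (hf : IsCornerDensity I f)
    (hint : IntegrableOn (fun x => f x * Real.log (x * f x)) I) :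
    -1 - ∫ x in I, f x * Real.log (x * f x) ≥ 0 := by
  have hnonneg : 0 ≤ᵐ[volume.restrict I] fun x => -(f x * log (x * f x)) :=
    ae_restrict_of_forall_mem hf.ordConnected.measurableSet fun x hx =>
      neg_nonneg.2 (hf.mul_log_mul_nonpos hx)
  have hint' : IntegrableOn (fun x => -(f x * log (x * f x))) I := hint.neg
  have key := hf.one_le_lintegral_neg_mul_log
  rw [← ofReal_integral_eq_lintegral_ofReal hint' hnonneg, ENNReal.one_le_ofReal,
    integral_neg] at key
  linarith
end

section
/- Let X be a real-valued random variable whose probability density function is a corner density f : I → [0,∞), and suppose its differential entropy h(X) = -∫_I f ln(f) dx exists. Then h(X) ≥ 1 + E[ln X], i.e., -∫_I f(x) ln(f(x)) dx ≥ 1 + ∫_I f(x) ln(x) dx. -/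
/-!
With `F x = ∫₀ˣ f`, monotonicity of `f` gives `x f(x) ≤ F(x)`, hence pointwise
`f ln f + f ln x = f ln (x f) ≤ f ln F`. The right-hand side integrates to `∫₀¹ ln u du = -1`,
because `(F ln F - F)' = f ln F` wherever `f` is continuous, which is everywhere but at
countably many points.
-/

open MeasureTheory

open Set Filter Topology Real intervalIntegral

lemma MeasureTheory.IntegrableOn.intervalIntegrable_of_Ioi {g : ℝ → ℝ} {μ : Measure ℝ}
    {a b : ℝ} (hg : IntegrableOn g (Ioi a) μ) (hab : a ≤ b) : IntervalIntegrable g μ a b :=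
  (intervalIntegrable_iff_integrableOn_Ioc_of_le hab).2 (hg.mono_set Ioc_subset_Ioi_self)

lemma continuousOn_primitive_Ici {g : ℝ → ℝ} {a : ℝ} (hg : IntegrableOn g (Ioi a)) :
    ContinuousOn (fun x => ∫ t in a..x, g t) (Ici a) := by
  intro x (hx : a ≤ x)
  have hax : a ≤ x + 1 := by linarith
  have h := continuousOn_primitive_interval' (hg.intervalIntegrable_of_Ioi hax) left_mem_uIcc x
    (by rw [uIcc_of_le hax]; exact ⟨hx, by linarith⟩)
  rw [uIcc_of_le hax, ← Ici_inter_Iic] at h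
  exact h.mono_of_mem_nhdsWithin (inter_mem_nhdsWithin _ (Iic_mem_nhds (by linarith)))

lemma mul_log_add_mul_log_le {a x y : ℝ} (hx : 0 < x) (ha : 0 ≤ a) (h : x * a ≤ y) :
    a * log a + a * log x ≤ a * log y := by
  rcases ha.eq_or_lt with rfl | ha
  · simp
  rw [← mul_add, ← log_mul ha.ne' hx.ne']
  exact mul_le_mul_of_nonneg_left (log_le_log (by positivity) (by linarith)) ha.le

section DecreasingDensity

variable {g : ℝ → ℝ}

lemma mul_le_integral_of_antitoneOn (hg : IntegrableOn g (Ioi 0)) (hanti : AntitoneOn g (Ioi 0))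
    {x : ℝ} (hx : 0 < x) : x * g x ≤ ∫ t in 0..x, g t := by
  rw [integral_of_le hx.le]
  calc x * g x = ∫ _ in Ioc 0 x, g x := by simp [hx.le]
    _ ≤ ∫ t in Ioc 0 x, g t :=
      setIntegral_mono_on (integrableOn_const (by simp)) (hg.mono_set Ioc_subset_Ioi_self)
        measurableSet_Ioc fun t ht => hanti ht.1 hx ht.2

lemma intervalIntegral_le_integral_Ioi {a x : ℝ} (hg : IntegrableOn g (Ioi a))
    (hnn : ∀ t > a, 0 ≤ g t) (hx : a ≤ x) : ∫ t in a..x, g t ≤ ∫ t in Ioi a, g t := by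
  have hsplit := integral_interval_add_Ioi hg (hg.mono_set (Ioi_subset_Ioi hx))
  have htail : 0 ≤ ∫ t in Ioi x, g t :=
    setIntegral_nonneg measurableSet_Ioi fun t ht => hnn t (hx.trans_lt ht)
  linarith

lemma integral_pos_of_antitoneOn (hg : IntegrableOn g (Ioi 0)) (hnn : ∀ x > 0, 0 ≤ g x)
    (hanti : AntitoneOn g (Ioi 0)) (h1 : ∫ x in Ioi 0, g x = 1) {x : ℝ} (hx : 0 < x) :
    0 < ∫ t in 0..x, g t := by
  rcases (hnn x hx).lt_or_eq with hgx | hgx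
  · exact (mul_pos hx hgx).trans_le (mul_le_integral_of_antitoneOn hg hanti hx)
  -- if `g x = 0` then `g` vanishes beyond `x`, so all the mass lies in `(0, x]`
  have htail : ∫ t in Ioi x, g t = 0 := setIntegral_eq_zero_of_forall_eq_zero fun t ht =>
    le_antisymm (hgx ▸ hanti hx (hx.trans ht) ht.le) (hnn t (hx.trans ht))
  have hsplit := integral_interval_add_Ioi hg (hg.mono_set (Ioi_subset_Ioi hx.le))
  rw [htail, h1] at hsplit
  linarith

lemma integral_mul_log_primitive_eq (hg : IntegrableOn g (Ioi 0)) (hnn : ∀ x > 0, 0 ≤ g x)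
    (hanti : AntitoneOn g (Ioi 0)) (h1 : ∫ x in Ioi 0, g x = 1) {x : ℝ} (hx : 0 ≤ x)
    (hint : IntervalIntegrable (fun t => g t * log (∫ s in 0..t, g s)) volume 0 x) :
    ∫ t in 0..x, g t * log (∫ s in 0..t, g s) =
      (∫ t in 0..x, g t) * log (∫ t in 0..x, g t) - ∫ t in 0..x, g t := by
  set F := fun u => ∫ t in 0..u, g t
  have hFc : ContinuousOn F (Icc 0 x) := (continuousOn_primitive_Ici hg).mono Icc_subset_Ici_self
  have hFTC := integral_eq_of_hasDerivAt_off_countable_of_le (fun u => F u * log (F u) - F u) _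
    hx hanti.countable_not_continuousWithinAt ((continuous_mul_log.comp_continuousOn hFc).sub hFc)
    ?_ hint
  · simpa [F] using hFTC
  rintro t ⟨⟨ht, -⟩, htc⟩
  have hgt : ContinuousAt g t :=
    (not_not.1 fun h => htc ⟨ht, h⟩).continuousAt (Ioi_mem_nhds ht)
  have hFt : HasDerivAt F (g t) t :=
    integral_hasDerivAt_right (hg.intervalIntegrable_of_Ioi ht.le)
      ⟨Ioi 0, Ioi_mem_nhds ht, hg.aestronglyMeasurable⟩ hgt
  have hφ := ((hasDerivAt_mul_log (integral_pos_of_antitoneOn hg hnn hanti h1 ht).ne').sub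
    (hasDerivAt_id' _)).comp t hFt
  exact hφ.congr_deriv (by ring)

theorem integral_mul_log_primitive_eq_neg_one (hg : IntegrableOn g (Ioi 0))
    (hnn : ∀ x > 0, 0 ≤ g x) (hanti : AntitoneOn g (Ioi 0)) (h1 : ∫ x in Ioi 0, g x = 1)
    (hint : IntegrableOn (fun x => g x * log (∫ t in 0..x, g t)) (Ioi 0)) :
    ∫ x in Ioi 0, g x * log (∫ t in 0..x, g t) = -1 := by
  have hF : Tendsto (fun x => ∫ t in 0..x, g t) atTop (𝓝 1) :=
    h1 ▸ intervalIntegral_tendsto_integral_Ioi 0 hg tendsto_id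
  have hφ : Tendsto (fun x => (∫ t in 0..x, g t) * log (∫ t in 0..x, g t) - ∫ t in 0..x, g t)
      atTop (𝓝 (-1)) := by
    simpa using (hF.mul (hF.log one_ne_zero)).sub hF
  refine tendsto_nhds_unique (intervalIntegral_tendsto_integral_Ioi 0 hint tendsto_id)
    (hφ.congr' ?_)
  filter_upwards [eventually_ge_atTop 0] with x hx
  exact (integral_mul_log_primitive_eq hg hnn hanti h1 hx (hint.intervalIntegrable_of_Ioi hx)).symm

theorem integral_mul_log_add_integral_mul_log_le_neg_one (hg : IntegrableOn g (Ioi 0))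
    (hnn : ∀ x > 0, 0 ≤ g x) (hanti : AntitoneOn g (Ioi 0)) (h1 : ∫ x in Ioi 0, g x = 1)
    (h_ent : IntegrableOn (fun x => g x * log (g x)) (Ioi 0))
    (h_log : IntegrableOn (fun x => g x * log x) (Ioi 0)) :
    (∫ x in Ioi 0, g x * log (g x)) + ∫ x in Ioi 0, g x * log x ≤ -1 := by
  set G := fun x => g x * log (∫ t in 0..x, g t)
  have hlower : ∀ x ∈ Ioi 0, g x * log (g x) + g x * log x ≤ G x := fun x hx =>
    mul_log_add_mul_log_le hx (hnn x hx) (mul_le_integral_of_antitoneOn hg hanti hx)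
  have hupper : ∀ x ∈ Ioi 0, G x ≤ 0 := fun x hx =>
    mul_nonpos_of_nonneg_of_nonpos (hnn x hx) (log_nonpos
      (integral_pos_of_antitoneOn hg hnn hanti h1 hx).le
      ((intervalIntegral_le_integral_Ioi hg hnn hx.le).trans_eq h1))
  have hlogF : ContinuousOn (fun x => log (∫ t in 0..x, g t)) (Ioi 0) :=
    ((continuousOn_primitive_Ici hg).mono Ioi_subset_Ici_self).log
      fun x hx => (integral_pos_of_antitoneOn hg hnn hanti h1 hx).ne'
  have hGmeas : AEStronglyMeasurable G (volume.restrict (Ioi 0)) :=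
    hg.aestronglyMeasurable.mul (hlogF.aestronglyMeasurable measurableSet_Ioi)
  have hGint : IntegrableOn G (Ioi 0) := by
    refine Integrable.mono (h_ent.add h_log) hGmeas ?_
    filter_upwards [ae_restrict_mem measurableSet_Ioi] with x hx
    rw [norm_of_nonpos (hupper x hx)]
    exact (neg_le_neg (hlower x hx)).trans (neg_le_abs _)
  rw [← integral_add h_ent h_log, ← integral_mul_log_primitive_eq_neg_one hg hnn hanti h1 hGint]
  exact setIntegral_mono_on (h_ent.add h_log) hGint measurableSet_Ioi hlower

end DecreasingDensity

lemma antitoneOn_indicator_Ioi {I : Set ℝ} {f : ℝ → ℝ} (hconn : (I ∪ {0}).OrdConnected)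
    (hpos : ∀ x ∈ I, 0 ≤ f x) (hanti : AntitoneOn f I) : AntitoneOn (I.indicator f) (Ioi 0) := by
  intro x hx y _ hxy
  by_cases hy : y ∈ I
  · have hxI : x ∈ I := (hconn.out (mem_union_right I rfl) (mem_union_left _ hy)
      ⟨mem_Ioi.1 hx |>.le, hxy⟩).resolve_right (ne_of_gt hx)
    simpa [hxI, hy] using hanti hxI hy hxy
  · simpa [hy] using indicator_nonneg hpos x

lemma setIntegral_eq_setIntegral_Ioi_indicator {I : Set ℝ} (hI : MeasurableSet I)
    (hI0 : I ⊆ Ici 0) (h : ℝ → ℝ) : ∫ x in I, h x = ∫ x in Ioi 0, I.indicator h x := by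
  rw [setIntegral_indicator hI, setIntegral_congr_set (Ioi_ae_eq_Ici.inter (ae_eq_refl I)),
    inter_eq_right.2 hI0]

/-- If a random variable `X` has a corner density `f : I → [0,∞)` and
its differential entropy `h(X) = -∫_I f ln f` exists, then `h(X) ≥ 1 + E[ln X]`, i.e.
`-∫_I f(x) ln(f(x)) dx ≥ 1 + ∫_I f(x) ln(x) dx`. -/
theorem differentialEntropy_ge_one_add_expected_log (I : Set ℝ) (f : ℝ → ℝ)
    (hf : IsCornerDensity I f)
    (h_ent : IntegrableOn (fun x => f x * Real.log (f x)) I)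
    (h_log : IntegrableOn (fun x => f x * Real.log x) I) :
    (-∫ x in I, f x * Real.log (f x)) ≥ 1 + ∫ x in I, f x * Real.log x := by
  obtain ⟨hI0, hconn, hpos, hanti, hint1⟩ := hf
  have hI : MeasurableSet I := measurableSet_insert.1 (union_singleton ▸ hconn.measurableSet)
  have hfI : IntegrableOn f I := Integrable.of_integral_ne_zero (by rw [hint1]; exact one_ne_zero)
  set g := I.indicator f
  have hgg : I.indicator (fun x => f x * log (f x)) = fun x => g x * log (g x) := by
    ext x; by_cases hx : x ∈ I <;> simp [g, hx]
  have hgl : I.indicator (fun x => f x * log x) = fun x => g x * log x := by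
    ext x; by_cases hx : x ∈ I <;> simp [g, hx]
  have key := integral_mul_log_add_integral_mul_log_le_neg_one
    (hfI.integrable_indicator hI).integrableOn (fun x _ => indicator_nonneg hpos x)
    (antitoneOn_indicator_Ioi hconn hpos hanti)
    (by rw [← setIntegral_eq_setIntegral_Ioi_indicator hI hI0, hint1])
    (hgg ▸ (h_ent.integrable_indicator hI).integrableOn)
    (hgl ▸ (h_log.integrable_indicator hI).integrableOn)
  rw [setIntegral_eq_setIntegral_Ioi_indicator hI hI0, hgg,
    setIntegral_eq_setIntegral_Ioi_indicator hI hI0, hgl]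
  linarith
end

section
/- Suppose f : (0,b) → (0,∞) is monotone decreasing, and define g : (0,λb) → (0,∞) by g(z) = β f(z/λ) for constants λ > 0 and β > 0. Then the slide functions of f and g coincide: σ_f(t) = σ_g(t) for every t in their (common) domain. -/
open MeasureTheory


lemma scale_integral_Ioo (lam b : ℝ) (hlam : 0 < lam) (hb : 0 ≤ b) (h : ℝ → ℝ) :
    (∫ z in Set.Ioo (0:ℝ) (lam * b), h (z / lam)) = lam * ∫ x in Set.Ioo (0:ℝ) b, h x := by
  have hlb : (0:ℝ) ≤ lam * b := mul_nonneg hlam.le hb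
  rw [← integral_Ioc_eq_integral_Ioo, ← intervalIntegral.integral_of_le hlb,
    intervalIntegral.integral_comp_div _ hlam.ne', zero_div,
    mul_div_cancel_left₀ _ hlam.ne',
    intervalIntegral.integral_of_le hb, integral_Ioc_eq_integral_Ioo, smul_eq_mul]

lemma alg_aux (k lam A X : ℝ) (hk : k ≠ 0) (hlam : lam ≠ 0) :
    (k * X) / (lam * (k * A)) = (1 / lam) * (X / A) := by
  rcases eq_or_ne A 0 with h | h
  · simp [h]
  · field_simp


/-- The slide function `σ_f(t)` of a function `f` on `(0,b)`:
`σ_f(t) = -1 - ∫₀^b (f(x)^t / A(t)) ln( x · f(x)^t / A(t) ) dx` where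
`A(t) = ∫₀^b f(x)^t dx`. -/
noncomputable def slideFun (b : ℝ) (f : ℝ → ℝ) (t : ℝ) : ℝ :=
  -1 - ∫ x in Set.Ioo (0:ℝ) b,
    (f x ^ t / ∫ y in Set.Ioo (0:ℝ) b, f y ^ t) *
      Real.log (x * (f x ^ t / ∫ y in Set.Ioo (0:ℝ) b, f y ^ t))

/-- `t` lies in the domain of the slide function of `f`: `t ≥ 0` and both `A(t)` and the
genial-entropy integral defining `σ_f(t)` exist. -/
def MemSlideDomain (b : ℝ) (f : ℝ → ℝ) (t : ℝ) : Prop :=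
  0 ≤ t ∧ IntegrableOn (fun x => f x ^ t) (Set.Ioo (0:ℝ) b) ∧
    IntegrableOn
      (fun x => (f x ^ t / ∫ y in Set.Ioo (0:ℝ) b, f y ^ t) *
        Real.log (x * (f x ^ t / ∫ y in Set.Ioo (0:ℝ) b, f y ^ t)))
      (Set.Ioo (0:ℝ) b)

/-- If `f : (0,b) → (0,∞)` is monotone decreasing and
`g(z) = β f(z/λ)` on `(0, λb)` for constants `λ, β > 0`, then the slide functions of `f`
and `g` coincide on their common domain. -/
theorem slideFun_scale_invariant (b lam beta : ℝ) (hb : 0 < b)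
    (hlam : 0 < lam) (hbeta : 0 < beta) (f g : ℝ → ℝ)
    (hmono : AntitoneOn f (Set.Ioo (0:ℝ) b))
    (hpos : ∀ x ∈ Set.Ioo (0:ℝ) b, 0 < f x)
    (hg : ∀ z ∈ Set.Ioo (0:ℝ) (lam * b), g z = beta * f (z / lam)) :
    ∀ t : ℝ, MemSlideDomain b f t → MemSlideDomain (lam * b) g t →
      slideFun b f t = slideFun (lam * b) g t := by
  intro t hft hgt
  have hbt : (0:ℝ) < beta ^ t := Real.rpow_pos_of_pos hbeta t
  set A := ∫ y in Set.Ioo (0:ℝ) b, f y ^ t with hAdef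
  have hmem : ∀ z ∈ Set.Ioo (0:ℝ) (lam * b), z / lam ∈ Set.Ioo (0:ℝ) b := by
    intro z hz
    exact ⟨div_pos hz.1 hlam, (div_lt_iff₀ hlam).2 (by rw [mul_comm]; exact hz.2)⟩
  have hA : (∫ y in Set.Ioo (0:ℝ) (lam * b), g y ^ t) = lam * (beta ^ t * A) := by
    calc (∫ y in Set.Ioo (0:ℝ) (lam * b), g y ^ t)
        = ∫ y in Set.Ioo (0:ℝ) (lam * b), beta ^ t * f (y / lam) ^ t := by
          refine setIntegral_congr_fun measurableSet_Ioo (fun z hz => ?_)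
          rw [hg z hz, Real.mul_rpow hbeta.le (hpos _ (hmem z hz)).le]
      _ = lam * ∫ x in Set.Ioo (0:ℝ) b, beta ^ t * f x ^ t :=
          scale_integral_Ioo lam b hlam hb.le (fun x => beta ^ t * f x ^ t)
      _ = lam * (beta ^ t * A) := by rw [integral_const_mul]
  have hI : (∫ x in Set.Ioo (0:ℝ) (lam * b),
      (g x ^ t / ∫ y in Set.Ioo (0:ℝ) (lam * b), g y ^ t) *
        Real.log (x * (g x ^ t / ∫ y in Set.Ioo (0:ℝ) (lam * b), g y ^ t)))
      = ∫ x in Set.Ioo (0:ℝ) b, (f x ^ t / A) * Real.log (x * (f x ^ t / A)) := by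
    rw [hA]
    calc (∫ x in Set.Ioo (0:ℝ) (lam * b),
        (g x ^ t / (lam * (beta ^ t * A))) *
          Real.log (x * (g x ^ t / (lam * (beta ^ t * A)))))
        = ∫ z in Set.Ioo (0:ℝ) (lam * b),
            (1 / lam) * ((f (z / lam) ^ t / A) *
              Real.log ((z / lam) * (f (z / lam) ^ t / A))) := by
          refine setIntegral_congr_fun measurableSet_Ioo (fun z hz => ?_)
          have hQ : g z ^ t / (lam * (beta ^ t * A)) = (1 / lam) * (f (z / lam) ^ t / A) := by
            rw [hg z hz, Real.mul_rpow hbeta.le (hpos _ (hmem z hz)).le]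
            exact alg_aux _ _ _ _ hbt.ne' hlam.ne'
          rw [hQ, show z * ((1 / lam) * (f (z / lam) ^ t / A))
              = (z / lam) * (f (z / lam) ^ t / A) by ring]
          ring
      _ = lam * ∫ x in Set.Ioo (0:ℝ) b,
            (1 / lam) * ((f x ^ t / A) * Real.log (x * (f x ^ t / A))) :=
          scale_integral_Ioo lam b hlam hb.le
            (fun x => (1 / lam) * ((f x ^ t / A) * Real.log (x * (f x ^ t / A))))
      _ = ∫ x in Set.Ioo (0:ℝ) b, (f x ^ t / A) * Real.log (x * (f x ^ t / A)) := by
          rw [integral_const_mul, ← mul_assoc, mul_one_div, div_self hlam.ne', one_mul]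
  simp only [slideFun, ← hAdef, hI]
end

section
/- Suppose f : (0,b) → (0,∞) is monotone decreasing and ∫₀^b (f(x))^s dx < ∞ for some s > 0. Then the slide function σ_f is defined (finite) at every t ∈ [0, s/2], and σ_f is continuous from the right at 0 with σ_f(0) = 0. -/
/-!
Since `f` is decreasing, `x f(x)^s ≤ ∫₀^b f^s =: M`, hence for `0 ≤ t ≤ s/2`
`f(x)^t ≤ 1 + f(x)^(s/2) ≤ 1 + √M x^(-1/2)`. Moreover `A(t)` stays between
`m = ∫₀^b min(1, f^s) > 0` and `b + M`, so `|log A(t)| ≤ K` uniformly. Splitting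
`log (x f^t / A) = log x + log f^t - log A` and using `z |log z| ≤ 1 + z²`, all the integrands
of `σ_f(t)`, `t ∈ [0, s/2]`, are dominated by the integrable function
`((1 + √M x^(-1/2)) (|log x| + K) + 2 + f^s) / m`. Dominated convergence makes `σ_f` continuous
on `[0, s/2]`, and at `t = 0` the integrand is `log (x / b) / b`, whose integral is `-1`.
-/

open MeasureTheory

open Set Filter Real Topology

namespace Real

lemma abs_log_le_rpow_add_rpow_neg {x ε : ℝ} (hx : 0 < x) (hε : 0 < ε) :
    |log x| ≤ (x ^ ε + x ^ (-ε)) / ε := by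
  have hpos : log x ≤ x ^ ε / ε := log_le_rpow_div hx.le hε
  have hneg : -log x ≤ x ^ (-ε) / ε := by
    simpa [log_inv, inv_rpow hx.le, rpow_neg hx.le] using log_le_rpow_div (inv_pos.2 hx).le hε
  have h1 : 0 ≤ x ^ ε / ε := by positivity
  have h2 : 0 ≤ x ^ (-ε) / ε := by positivity
  rw [add_div, abs_le]
  constructor <;> linarith

lemma integrableOn_Ioo_rpow_mul_abs_log {b r : ℝ} (hb : 0 < b) (hr : -1 < r) :
    IntegrableOn (fun x ↦ x ^ r * |log x|) (Ioo 0 b) := by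
  set ε := (r + 1) / 2 with hε_def
  have hε : 0 < ε := by rw [hε_def]; linarith
  have hbound : IntegrableOn (fun x ↦ (x ^ (r + ε) + x ^ (r - ε)) / ε) (Ioo 0 b) :=
    (((intervalIntegral.integrableOn_Ioo_rpow_iff hb).2 (by linarith)).add
      ((intervalIntegral.integrableOn_Ioo_rpow_iff hb).2 (by linarith))).div_const ε
  refine hbound.mono' (by fun_prop) ((ae_restrict_iff' measurableSet_Ioo).2 ?_)
  refine .of_forall fun x hx ↦ ?_
  rw [norm_mul, norm_of_nonneg (rpow_nonneg hx.1.le r), norm_eq_abs, abs_abs]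
  calc x ^ r * |log x| ≤ x ^ r * ((x ^ ε + x ^ (-ε)) / ε) :=
        mul_le_mul_of_nonneg_left (abs_log_le_rpow_add_rpow_neg hx.1 hε) (rpow_nonneg hx.1.le r)
    _ = (x ^ (r + ε) + x ^ (r - ε)) / ε := by
        rw [rpow_add hx.1, rpow_sub hx.1, rpow_neg hx.1.le]; field_simp

lemma rpow_le_one_add_rpow {y t u : ℝ} (hy : 0 < y) (ht : 0 ≤ t) (htu : t ≤ u) :
    y ^ t ≤ 1 + y ^ u := by
  rcases le_or_gt y 1 with h | h
  · linarith [rpow_le_one hy.le h ht, rpow_nonneg hy.le u]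
  · linarith [rpow_le_rpow_of_exponent_le h.le htu]

lemma min_one_rpow_le_rpow {y t u : ℝ} (hy : 0 < y) (ht : 0 ≤ t) (htu : t ≤ u) :
    min 1 (y ^ u) ≤ y ^ t := by
  rcases le_or_gt y 1 with h | h
  · exact (min_le_right _ _).trans (rpow_le_rpow_of_exponent_ge hy h htu)
  · exact (min_le_left _ _).trans (one_le_rpow h.le ht)

lemma mul_abs_log_le_one_add_sq {z : ℝ} (hz : 0 ≤ z) : z * |log z| ≤ 1 + z ^ 2 := by
  rcases le_or_gt z 1 with h | h
  · rcases hz.eq_or_lt with rfl | hz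
    · simp
    · have := abs_log_mul_self_lt z hz h
      rw [abs_mul, abs_of_pos hz] at this
      nlinarith
  · rw [abs_of_nonneg (log_nonneg h.le)]
    nlinarith [log_le_sub_one_of_pos (zero_lt_one.trans h)]

lemma abs_div_mul_log_mul_div_le {x p a m F K E : ℝ} (hx : 0 < x) (hp : 0 < p) (hm : 0 < m)
    (hma : m ≤ a) (hK : |log a| ≤ K) (hpF : p ≤ F) (hE : p * |log p| ≤ E) :
    |p / a * log (x * (p / a))| ≤ (F * (|log x| + K) + E) / m := by
  have ha : 0 < a := hm.trans_le hma
  have hlog : |log (x * (p / a))| ≤ |log x| + K + |log p| := by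
    rw [log_mul hx.ne' (div_pos hp ha).ne', log_div hp.ne' ha.ne']
    linarith [abs_add_le (log x) (log p - log a), abs_sub (log p) (log a)]
  have hK0 : 0 ≤ K := (abs_nonneg _).trans hK
  calc |p / a * log (x * (p / a))| = p / a * |log (x * (p / a))| := by
        rw [abs_mul, abs_of_pos (div_pos hp ha)]
    _ ≤ p / m * (|log x| + K + |log p|) := by gcongr
    _ = (p * (|log x| + K) + p * |log p|) / m := by ring
    _ ≤ (F * (|log x| + K) + E) / m := by gcongr

end Real

lemma AntitoneOn.mul_le_setIntegral_Ioo {g : ℝ → ℝ} {b x : ℝ} (hg : AntitoneOn g (Ioo 0 b))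
    (hg0 : ∀ y ∈ Ioo 0 b, 0 ≤ g y) (hint : IntegrableOn g (Ioo 0 b)) (hx : x ∈ Ioo 0 b) :
    x * g x ≤ ∫ y in Ioo 0 b, g y := by
  have hsub : Ioo 0 x ⊆ Ioo 0 b := Ioo_subset_Ioo_right hx.2.le
  calc x * g x = ∫ _ in Ioo 0 x, g x := by simp [hx.1.le]
    _ ≤ ∫ y in Ioo 0 x, g y :=
        setIntegral_mono_on (integrableOn_const (by simp)) (hint.mono_set hsub)
          measurableSet_Ioo fun y hy ↦ hg (hsub hy) hx hy.2.le
    _ ≤ ∫ y in Ioo 0 b, g y :=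
        setIntegral_mono_set hint ((ae_restrict_iff' measurableSet_Ioo).2 (.of_forall hg0))
          hsub.eventuallyLE

noncomputable def slideMass (b : ℝ) (f : ℝ → ℝ) (t : ℝ) : ℝ :=
  ∫ y in Ioo 0 b, f y ^ t

noncomputable def slideIntegrand (b : ℝ) (f : ℝ → ℝ) (t x : ℝ) : ℝ :=
  f x ^ t / slideMass b f t * log (x * (f x ^ t / slideMass b f t))

lemma slideFun_eq (b : ℝ) (f : ℝ → ℝ) (t : ℝ) :
    slideFun b f t = -1 - ∫ x in Ioo 0 b, slideIntegrand b f t x := rfl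

lemma slideFun_zero {b : ℝ} (hb : 0 < b) (f : ℝ → ℝ) : slideFun b f 0 = 0 := by
  have hmass : slideMass b f 0 = b := by simp [slideMass, hb.le]
  have hlog : ∫ x in Ioo 0 b, log x = b * log b - b := by
    rw [← integral_Ioc_eq_integral_Ioo, ← intervalIntegral.integral_of_le hb.le, integral_log]
    simp
  have hint : IntegrableOn log (Ioo 0 b) :=
    (intervalIntegrable_iff_integrableOn_Ioo_of_le hb.le).1
      intervalIntegral.intervalIntegrable_log'
  have heq : EqOn (slideIntegrand b f 0) (fun x ↦ b⁻¹ * log x - b⁻¹ * log b) (Ioo 0 b) :=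
    fun x hx ↦ by
      rw [slideIntegrand, hmass, rpow_zero, one_div, log_mul hx.1.ne' (inv_ne_zero hb.ne'),
        log_inv]
      ring
  rw [slideFun_eq, setIntegral_congr_fun measurableSet_Ioo heq,
    integral_sub (hint.const_mul _) (integrableOn_const (by simp)), integral_const_mul, hlog]
  simp only [integral_const, measureReal_restrict_apply_univ, volume_real_Ioo_of_le hb.le,
    smul_eq_mul]
  field_simp
  ring

section Slide

variable {b s t : ℝ} {f : ℝ → ℝ}

lemma aestronglyMeasurable_rpow_of_antitoneOn (hmono : AntitoneOn f (Ioo 0 b)) (t : ℝ) :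
    AEStronglyMeasurable (fun x ↦ f x ^ t) (volume.restrict (Ioo 0 b)) :=
  haveI := aemeasurable_restrict_of_antitoneOn measurableSet_Ioo hmono
  (by fun_prop : AEMeasurable (fun x ↦ f x ^ t) _).aestronglyMeasurable

lemma aestronglyMeasurable_slideIntegrand (hmono : AntitoneOn f (Ioo 0 b)) (t : ℝ) :
    AEStronglyMeasurable (slideIntegrand b f t) (volume.restrict (Ioo 0 b)) := by
  have hq := (aestronglyMeasurable_rpow_of_antitoneOn hmono t).aemeasurable.div_const
    (slideMass b f t)
  exact (hq.mul (measurable_log.comp_aemeasurable (aemeasurable_id.mul hq))).aestronglyMeasurable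

lemma ae_norm_rpow_le_one_add_rpow (hpos : ∀ x ∈ Ioo 0 b, 0 < f x) (ht : t ∈ Icc 0 s) :
    ∀ᵐ x ∂volume.restrict (Ioo 0 b), ‖f x ^ t‖ ≤ 1 + f x ^ s := by
  refine (ae_restrict_iff' measurableSet_Ioo).2 (.of_forall fun x hx ↦ ?_)
  rw [norm_of_nonneg (rpow_nonneg (hpos x hx).le t)]
  exact rpow_le_one_add_rpow (hpos x hx) ht.1 ht.2

lemma integrableOn_rpow_of_mem_Icc (hmono : AntitoneOn f (Ioo 0 b))
    (hpos : ∀ x ∈ Ioo 0 b, 0 < f x) (hfs : IntegrableOn (fun x ↦ f x ^ s) (Ioo 0 b))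
    (ht : t ∈ Icc 0 s) : IntegrableOn (fun x ↦ f x ^ t) (Ioo 0 b) :=
  ((integrableOn_const measure_Ioo_lt_top.ne).add hfs).mono'
    (aestronglyMeasurable_rpow_of_antitoneOn hmono t) (ae_norm_rpow_le_one_add_rpow hpos ht)

lemma continuousOn_slideMass (hmono : AntitoneOn f (Ioo 0 b))
    (hpos : ∀ x ∈ Ioo 0 b, 0 < f x) (hfs : IntegrableOn (fun x ↦ f x ^ s) (Ioo 0 b)) :
    ContinuousOn (slideMass b f) (Icc 0 s) :=
  continuousOn_of_dominated (fun t _ ↦ aestronglyMeasurable_rpow_of_antitoneOn hmono t)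
    (fun _ ht ↦ ae_norm_rpow_le_one_add_rpow hpos ht)
    ((integrableOn_const measure_Ioo_lt_top.ne).add hfs)
    ((ae_restrict_iff' measurableSet_Ioo).2 (.of_forall fun x hx ↦
      (continuous_const_rpow (hpos x hx).ne').continuousOn))

lemma integrableOn_min_one_rpow (hmono : AntitoneOn f (Ioo 0 b))
    (hpos : ∀ x ∈ Ioo 0 b, 0 < f x) (s : ℝ) :
    IntegrableOn (fun y ↦ min 1 (f y ^ s)) (Ioo 0 b) := by
  refine (integrableOn_const (C := (1 : ℝ)) measure_Ioo_lt_top.ne).mono'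
    (aemeasurable_const.min
      (aestronglyMeasurable_rpow_of_antitoneOn hmono s).aemeasurable).aestronglyMeasurable
    ((ae_restrict_iff' measurableSet_Ioo).2 (.of_forall fun y hy ↦ ?_))
  rw [norm_of_nonneg (le_min zero_le_one (rpow_nonneg (hpos y hy).le s))]
  exact min_le_left _ _

lemma integral_min_one_rpow_pos (hb : 0 < b) (hmono : AntitoneOn f (Ioo 0 b))
    (hpos : ∀ x ∈ Ioo 0 b, 0 < f x) (s : ℝ) : 0 < ∫ y in Ioo 0 b, min 1 (f y ^ s) := by
  have hmin : ∀ y ∈ Ioo 0 b, 0 < min 1 (f y ^ s) :=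
    fun y hy ↦ lt_min one_pos (rpow_pos_of_pos (hpos y hy) s)
  rw [setIntegral_pos_iff_support_of_nonneg_ae
    ((ae_restrict_iff' measurableSet_Ioo).2 (.of_forall fun y hy ↦ (hmin y hy).le))
    (integrableOn_min_one_rpow hmono hpos s),
    inter_eq_right.2 fun y hy ↦ Function.mem_support.2 (hmin y hy).ne']
  simpa using hb

lemma integral_min_one_rpow_le_slideMass (hmono : AntitoneOn f (Ioo 0 b))
    (hpos : ∀ x ∈ Ioo 0 b, 0 < f x) (hfs : IntegrableOn (fun x ↦ f x ^ s) (Ioo 0 b))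
    (ht : t ∈ Icc 0 s) : ∫ y in Ioo 0 b, min 1 (f y ^ s) ≤ slideMass b f t :=
  setIntegral_mono_on (integrableOn_min_one_rpow hmono hpos s)
    (integrableOn_rpow_of_mem_Icc hmono hpos hfs ht) measurableSet_Ioo
    fun y hy ↦ min_one_rpow_le_rpow (hpos y hy) ht.1 ht.2

lemma slideMass_le_add_integral (hb : 0 < b) (hmono : AntitoneOn f (Ioo 0 b))
    (hpos : ∀ x ∈ Ioo 0 b, 0 < f x) (hfs : IntegrableOn (fun x ↦ f x ^ s) (Ioo 0 b))
    (ht : t ∈ Icc 0 s) : slideMass b f t ≤ b + ∫ y in Ioo 0 b, f y ^ s := by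
  have hone : IntegrableOn (fun _ ↦ (1 : ℝ)) (Ioo 0 b) :=
    integrableOn_const measure_Ioo_lt_top.ne
  calc slideMass b f t ≤ ∫ y in Ioo 0 b, (1 + f y ^ s) :=
        setIntegral_mono_on (integrableOn_rpow_of_mem_Icc hmono hpos hfs ht) (hone.add hfs)
          measurableSet_Ioo fun y hy ↦ rpow_le_one_add_rpow (hpos y hy) ht.1 ht.2
    _ = b + ∫ y in Ioo 0 b, f y ^ s := by
        rw [integral_add hone hfs]
        simp [hb.le]

lemma rpow_le_one_add_mul_rpow_neg_half (hmono : AntitoneOn f (Ioo 0 b))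
    (hpos : ∀ x ∈ Ioo 0 b, 0 < f x) (hfs : IntegrableOn (fun x ↦ f x ^ s) (Ioo 0 b))
    (ht : t ∈ Icc 0 (s / 2)) {x : ℝ} (hx : x ∈ Ioo 0 b) :
    f x ^ t ≤ 1 + (∫ y in Ioo 0 b, f y ^ s) ^ (1 / 2 : ℝ) * x ^ (-(1 / 2) : ℝ) := by
  have hs : 0 ≤ s := by linarith [ht.1, ht.2]
  have hfx := hpos x hx
  set M := ∫ y in Ioo 0 b, f y ^ s
  have hmarkov : x * f x ^ s ≤ M :=
    AntitoneOn.mul_le_setIntegral_Ioo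
      (fun y hy z hz hyz ↦ rpow_le_rpow (hpos z hz).le (hmono hy hz hyz) hs)
      (fun y hy ↦ rpow_nonneg (hpos y hy).le s) hfs hx
  have hM : 0 ≤ M := (mul_nonneg hx.1.le (rpow_nonneg hfx.le s)).trans hmarkov
  have hhalf : f x ^ (s / 2) ≤ M ^ (1 / 2 : ℝ) * x ^ (-(1 / 2) : ℝ) :=
    calc f x ^ (s / 2) = (f x ^ s) ^ (1 / 2 : ℝ) := by rw [← rpow_mul hfx.le]; ring_nf
      _ ≤ (M / x) ^ (1 / 2 : ℝ) := by
          gcongr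
          rw [le_div_iff₀ hx.1, mul_comm]
          exact hmarkov
      _ = M ^ (1 / 2 : ℝ) * x ^ (-(1 / 2) : ℝ) := by
          rw [div_rpow hM hx.1.le, rpow_neg hx.1.le, div_eq_mul_inv]
  linarith [rpow_le_one_add_rpow hfx ht.1 ht.2]

lemma exists_integrableOn_bound_slideIntegrand (hb : 0 < b) (hmono : AntitoneOn f (Ioo 0 b))
    (hpos : ∀ x ∈ Ioo 0 b, 0 < f x) (hfs : IntegrableOn (fun x ↦ f x ^ s) (Ioo 0 b)) :
    ∃ D : ℝ → ℝ, IntegrableOn D (Ioo 0 b) ∧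
      ∀ t ∈ Icc 0 (s / 2), ∀ x ∈ Ioo 0 b, ‖slideIntegrand b f t x‖ ≤ D x := by
  set M := ∫ y in Ioo 0 b, f y ^ s
  set m := ∫ y in Ioo 0 b, min 1 (f y ^ s)
  set K := max |log m| |log (b + M)|
  set C := M ^ (1 / 2 : ℝ)
  have hm : 0 < m := integral_min_one_rpow_pos hb hmono hpos s
  have hlog : IntegrableOn (fun x ↦ |log x|) (Ioo 0 b) :=
    ((intervalIntegrable_iff_integrableOn_Ioo_of_le hb.le).1
      intervalIntegral.intervalIntegrable_log').norm
  have hconst (c : ℝ) : IntegrableOn (fun _ ↦ c) (Ioo 0 b) :=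
    integrableOn_const measure_Ioo_lt_top.ne
  refine ⟨fun x ↦ (|log x| + K + C * (x ^ (-(1 / 2) : ℝ) * |log x| +
      K * x ^ (-(1 / 2) : ℝ)) + (2 + f x ^ s)) / m, ?_, fun t ht x hx ↦ ?_⟩
  · exact (((hlog.add (hconst K)).add
      (((integrableOn_Ioo_rpow_mul_abs_log hb (by norm_num)).add
        (((intervalIntegral.integrableOn_Ioo_rpow_iff hb).2 (by norm_num)).const_mul K)).const_mul
          C)).add ((hconst 2).add hfs)).div_const m
  · have hts : t ∈ Icc 0 s := ⟨ht.1, by linarith [ht.1, ht.2]⟩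
    have hfx := hpos x hx
    have hA := integral_min_one_rpow_le_slideMass hmono hpos hfs hts
    have hlogA : |log (slideMass b f t)| ≤ K :=
      abs_le_max_abs_abs (log_le_log hm hA)
        (log_le_log (hm.trans_le hA) (slideMass_le_add_integral hb hmono hpos hfs hts))
    have hent : f x ^ t * |log (f x ^ t)| ≤ 2 + f x ^ s := by
      refine (mul_abs_log_le_one_add_sq (rpow_nonneg hfx.le t)).trans ?_
      rw [← rpow_natCast, ← rpow_mul hfx.le]
      linarith [rpow_le_one_add_rpow hfx (mul_nonneg ht.1 (Nat.cast_nonneg 2))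
        (by push_cast; linarith [ht.2] : t * (2 : ℕ) ≤ s)]
    refine (abs_div_mul_log_mul_div_le hx.1 (rpow_pos_of_pos hfx t) hm hA hlogA
      (rpow_le_one_add_mul_rpow_neg_half hmono hpos hfs ht hx) hent).trans_eq ?_
    ring

lemma memSlideDomain_of_mem_Icc (hb : 0 < b) (hmono : AntitoneOn f (Ioo 0 b))
    (hpos : ∀ x ∈ Ioo 0 b, 0 < f x) (hfs : IntegrableOn (fun x ↦ f x ^ s) (Ioo 0 b))
    (ht : t ∈ Icc 0 (s / 2)) : MemSlideDomain b f t := by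
  obtain ⟨D, hD, hbound⟩ := exists_integrableOn_bound_slideIntegrand hb hmono hpos hfs
  have hts : t ∈ Icc 0 s := ⟨ht.1, by linarith [ht.1, ht.2]⟩
  exact ⟨ht.1, integrableOn_rpow_of_mem_Icc hmono hpos hfs hts,
    hD.mono' (aestronglyMeasurable_slideIntegrand hmono t)
      ((ae_restrict_iff' measurableSet_Ioo).2 (.of_forall (hbound t ht)))⟩

lemma continuousOn_slideFun (hb : 0 < b) (hmono : AntitoneOn f (Ioo 0 b))
    (hpos : ∀ x ∈ Ioo 0 b, 0 < f x) (hfs : IntegrableOn (fun x ↦ f x ^ s) (Ioo 0 b)) :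
    ContinuousOn (slideFun b f) (Icc 0 (s / 2)) := by
  obtain ⟨D, hD, hbound⟩ := exists_integrableOn_bound_slideIntegrand hb hmono hpos hfs
  have hsub : Icc 0 (s / 2) ⊆ Icc 0 s := fun t ht ↦ ⟨ht.1, by linarith [ht.1, ht.2]⟩
  have hmass_cont := (continuousOn_slideMass hmono hpos hfs).mono hsub
  have hmass_pos (t : ℝ) (ht : t ∈ Icc 0 (s / 2)) : 0 < slideMass b f t :=
    (integral_min_one_rpow_pos hb hmono hpos s).trans_le
      (integral_min_one_rpow_le_slideMass hmono hpos hfs (hsub ht))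
  have hcont_integrand (x : ℝ) (hx : x ∈ Ioo 0 b) :
      ContinuousOn (fun t ↦ slideIntegrand b f t x) (Icc 0 (s / 2)) := by
    have hq : ContinuousOn (fun t ↦ f x ^ t / slideMass b f t) (Icc 0 (s / 2)) :=
      (continuous_const_rpow (hpos x hx).ne').continuousOn.div hmass_cont
        fun t ht ↦ (hmass_pos t ht).ne'
    exact hq.mul ((continuousOn_const.mul hq).log fun t ht ↦
      (mul_pos hx.1 (div_pos (rpow_pos_of_pos (hpos x hx) t) (hmass_pos t ht))).ne')
  exact continuousOn_const.sub <| continuousOn_of_dominated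
    (fun t _ ↦ aestronglyMeasurable_slideIntegrand hmono t)
    (fun t ht ↦ (ae_restrict_iff' measurableSet_Ioo).2 (.of_forall (hbound t ht))) hD
    ((ae_restrict_iff' measurableSet_Ioo).2 (.of_forall hcont_integrand))

end Slide

/-- If `f : (0,b) → (0,∞)` is monotone decreasing with
`∫₀^b f(x)^s dx < ∞` for some `s > 0`, then `σ_f` is defined on `[0, s/2]`, is continuous
from the right at `0`, and `σ_f(0) = 0`. -/
theorem slideFun_defined_and_right_continuous (b s : ℝ) (hb : 0 < b) (hs : 0 < s)
    (f : ℝ → ℝ) (hmono : AntitoneOn f (Set.Ioo (0:ℝ) b))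
    (hpos : ∀ x ∈ Set.Ioo (0:ℝ) b, 0 < f x)
    (hfs : IntegrableOn (fun x => f x ^ s) (Set.Ioo (0:ℝ) b)) :
    (∀ t ∈ Set.Icc (0:ℝ) (s / 2), MemSlideDomain b f t) ∧
      ContinuousWithinAt (slideFun b f) (Set.Ici 0) 0 ∧
      slideFun b f 0 = 0 :=
  ⟨fun _ ht ↦ memSlideDomain_of_mem_Icc hb hmono hpos hfs ht,
    (continuousOn_slideFun hb hmono hpos hfs 0 ⟨le_rfl, by positivity⟩).mono_of_mem_nhdsWithin
      (Icc_mem_nhdsGE (by positivity)),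
    slideFun_zero hb f⟩
end

section
/- Suppose f : (0,b) → (0,∞) is monotone decreasing with ∫₀^b (f(x))^s dx < ∞ for some s > 0, and let r > 0. If the n-th slide derivative ψ_n(f) exists, then ψ_n(f^r) exists and ψ_n(f^r) = r^n ψ_n(f). -/
open MeasureTheory

/-! Since `(f ^ r) ^ t = f ^ (r * t)`, the slide function of `f ^ r` is the slide function of `f`
reparametrised by `t ↦ r * t`; the `n`-th one-sided derivative at `0` then picks up `r ^ n`
by the chain rule for a linear change of variable. -/

theorem iteratedDerivWithin_comp_const_mul_preimage {𝕜 F : Type*} [NontriviallyNormedField 𝕜]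
    [NormedAddCommGroup F] [NormedSpace 𝕜 F] {c : 𝕜} (hc : c ≠ 0) (f : 𝕜 → F) {s : Set 𝕜}
    (hs : UniqueDiffOn 𝕜 s) {x : 𝕜} (hx : c * x ∈ s) (n : ℕ) :
    iteratedDerivWithin n (fun y => f (c * y)) ((c * ·) ⁻¹' s) x =
      c ^ n • iteratedDerivWithin n f s (c * x) := by
  let g : 𝕜 ≃L[𝕜] 𝕜 := ContinuousLinearEquiv.unitsEquivAut 𝕜 (Units.mk0 c hc)
  have hg : ⇑g = (c * ·) := funext fun y => mul_comm y c
  have hg1 : (g : 𝕜 →L[𝕜] 𝕜) 1 = c • 1 := by simp [g]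
  have key := g.iteratedFDerivWithin_comp_right f hs (by rwa [hg]) n
  rw [hg] at key
  simp only [iteratedDerivWithin_eq_iteratedFDerivWithin]
  rw [show (fun y => f (c * y)) = f ∘ (c * ·) from rfl, key,
    ContinuousMultilinearMap.compContinuousLinearMap_apply]
  simp only [hg1, ContinuousMultilinearMap.map_smul_univ, Finset.prod_const, Finset.card_univ,
    Fintype.card_fin]

theorem slideFun_rpow (b r : ℝ) (f : ℝ → ℝ) (hf : ∀ x ∈ Set.Ioo (0:ℝ) b, 0 ≤ f x) :
    slideFun b (fun x => f x ^ r) = fun t => slideFun b f (r * t) := by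
  funext t
  have hpow : ∀ x ∈ Set.Ioo (0:ℝ) b, (f x ^ r) ^ t = f x ^ (r * t) :=
    fun x hx => (Real.rpow_mul (hf x hx) r t).symm
  have hA : (∫ y in Set.Ioo (0:ℝ) b, (f y ^ r) ^ t) = ∫ y in Set.Ioo (0:ℝ) b, f y ^ (r * t) :=
    setIntegral_congr_fun measurableSet_Ioo hpow
  unfold slideFun
  rw [hA]
  congr 1
  exact setIntegral_congr_fun measurableSet_Ioo fun x hx => by rw [hpow x hx]

theorem slide_derivative_rpow_general (b r : ℝ) (hr : 0 < r)
    (n : ℕ) (f : ℝ → ℝ)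
    (hpos : ∀ x ∈ Set.Ioo (0:ℝ) b, 0 < f x)
    (hder : ContDiffWithinAt ℝ (n : ℕ∞) (slideFun b f) (Set.Ici 0) 0) :
    ContDiffWithinAt ℝ (n : ℕ∞) (slideFun b (fun x => f x ^ r)) (Set.Ici 0) 0 ∧
      iteratedDerivWithin n (slideFun b (fun x => f x ^ r)) (Set.Ici 0) 0 =
        r ^ n * iteratedDerivWithin n (slideFun b f) (Set.Ici 0) 0 := by
  rw [slideFun_rpow b r f fun x hx => (hpos x hx).le]
  have hpre : (r * ·) ⁻¹' Set.Ici (0:ℝ) = Set.Ici 0 := by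
    rw [Set.preimage_const_mul_Ici₀ 0 hr, zero_div]
  constructor
  · have hder' : ContDiffWithinAt ℝ n (slideFun b f) (Set.Ici 0) (r * 0) := by rwa [mul_zero]
    exact hder'.comp 0 (contDiffWithinAt_id.const_smul r) fun t ht => mul_nonneg hr.le ht
  · simpa only [hpre, mul_zero, smul_eq_mul] using
      iteratedDerivWithin_comp_const_mul_preimage hr.ne' (slideFun b f) (uniqueDiffOn_Ici 0)
        (by simp : r * 0 ∈ Set.Ici (0:ℝ)) n

/-- If `f : (0,b) → (0,∞)` is monotone decreasing with
`∫₀^b f(x)^s dx < ∞` for some `s > 0`, `r > 0`, and the `n`-th slide derivative of `f`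
(the `n`-th right-hand derivative of `σ_f` at `0`) exists, then the `n`-th slide derivative
of `f^r` exists and `ψₙ(f^r) = rⁿ ψₙ(f)`. -/
theorem slide_derivative_rpow (b s r : ℝ) (hb : 0 < b) (hs : 0 < s) (hr : 0 < r)
    (n : ℕ) (f : ℝ → ℝ) (hmono : AntitoneOn f (Set.Ioo (0:ℝ) b))
    (hpos : ∀ x ∈ Set.Ioo (0:ℝ) b, 0 < f x)
    (hfs : IntegrableOn (fun x => f x ^ s) (Set.Ioo (0:ℝ) b))
    (hder : ContDiffWithinAt ℝ (n : ℕ∞) (slideFun b f) (Set.Ici 0) 0) :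
    ContDiffWithinAt ℝ (n : ℕ∞) (slideFun b (fun x => f x ^ r)) (Set.Ici 0) 0 ∧
      iteratedDerivWithin n (slideFun b (fun x => f x ^ r)) (Set.Ici 0) 0 =
        r ^ n * iteratedDerivWithin n (slideFun b f) (Set.Ici 0) 0 :=
  slide_derivative_rpow_general b r hr n f hpos hder
end

section
/- Let D = (d₁, …, d_n) with d₁ ≥ d₂ ≥ ⋯ ≥ d_n > 0 and let f_D be the step function on [0,1) whose value on [(i-1)/n, i/n) is d_i. Then the first slide derivative of f_D is ψ₁(f_D) = (1/n) Σ_{i=2}^{n-1} i·ln(i)·ln(d_{i+1}/d_i) + (ln(n)/n) Σ_{i=1}^{n-1} ln(d_i/d_n). -/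
open MeasureTheory

/-!
On the `i`-th piece the normalised density `f_D^t / A(t)` is the constant `c_i(t) = d_i^t / A(t)`,
so `σ(t) = -1 - ∑ c_i(t) (K_i + log c_i(t) / n)` with `K_i = ∫ log` over the piece. At `t = 0`
every `c_i` equals `1` and `c_i'(0) = log d_i - (mean of log d)`, hence
`σ'(0) = -∑ c_i'(0) (K_i + 1/n)`. Since `K_i + 1/n = B(i/n) - B((i-1)/n)` for `B(x) = x log x`,
summation by parts yields the formula.
-/

open Real Finset

def IsUniformStep (n : ℕ) (v : ℕ → ℝ) (f : ℝ → ℝ) : Prop :=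
  ∀ i ∈ Icc 1 n, Set.EqOn f (fun _ => v i) (Set.Ioo (((i : ℝ) - 1) / n) (i / n))

/-- The paper's `A(t) = ∫₀¹ f_D(x)^t dx`. -/
noncomputable def meanRpow (n : ℕ) (d : ℕ → ℝ) (t : ℝ) : ℝ :=
  (∑ i ∈ Icc 1 n, d i ^ t) / n

section UniformPartition

variable {n : ℕ}

lemma setIntegral_Ioo_zero_one_eq_sum (hn : 0 < n) {g : ℝ → ℝ} {h : ℕ → ℝ → ℝ}
    (heq : ∀ i ∈ Icc 1 n, Set.EqOn g (h i) (Set.Ioo (((i : ℝ) - 1) / n) (i / n)))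
    (hint : ∀ i ∈ Icc 1 n, IntervalIntegrable (h i) volume (((i : ℝ) - 1) / n) (i / n)) :
    ∫ x in Set.Ioo 0 1, g x =
      ∑ i ∈ Icc 1 n, ∫ x in ((i : ℝ) - 1) / n..(i : ℝ) / n, h i x := by
  have hle (i : ℕ) : ((i : ℝ) - 1) / n ≤ i / n := by gcongr; linarith
  have hg (i) (hi : i ∈ Icc 1 n) : IntervalIntegrable g volume (((i : ℝ) - 1) / n) (i / n) :=
    (hint i hi).congr_uIoo (Set.uIoo_of_le (hle i) ▸ (heq i hi).symm)
  calc ∫ x in Set.Ioo 0 1, g x = ∫ x in (0 : ℝ)..1, g x := by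
        rw [intervalIntegral.integral_of_le zero_le_one, integral_Ioc_eq_integral_Ioo]
    _ = ∑ k ∈ range n,
          ∫ x in (((k + 1 : ℕ) : ℝ) - 1) / n..((k + 1 : ℕ) : ℝ) / n, g x := by
        have hsum := intervalIntegral.sum_integral_adjacent_intervals (μ := volume) (f := g)
          (a := fun k : ℕ => (k : ℝ) / n) fun k (hk : k < n) => by
            simpa using hg (k + 1) (mem_Icc.2 ⟨by omega, by omega⟩)
        simp only [Nat.cast_zero, zero_div, div_self (Nat.cast_ne_zero.2 hn.ne' : (n : ℝ) ≠ 0)]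
          at hsum
        rw [← hsum]
        simp
    _ = ∑ i ∈ Icc 1 n, ∫ x in ((i : ℝ) - 1) / n..(i : ℝ) / n, g x := by
        rw [range_eq_Ico,
          sum_Ico_add' (fun i : ℕ => ∫ x in ((i : ℝ) - 1) / n..(i : ℝ) / n, g x)]
        rfl
    _ = _ := sum_congr rfl fun i hi => intervalIntegral.integral_congr_Ioo_of_le (hle i) (heq i hi)

variable {v : ℕ → ℝ} {f : ℝ → ℝ}

lemma IsUniformStep.comp (hf : IsUniformStep n v f) (φ : ℝ → ℝ) :
    IsUniformStep n (fun i => φ (v i)) (fun x => φ (f x)) :=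
  fun i hi _ hx => congrArg φ (hf i hi hx)

lemma IsUniformStep.setIntegral (hn : 0 < n) (hf : IsUniformStep n v f) :
    ∫ x in Set.Ioo 0 1, f x = (∑ i ∈ Icc 1 n, v i) / n := by
  rw [setIntegral_Ioo_zero_one_eq_sum hn hf fun _ _ => intervalIntegrable_const, sum_div]
  refine sum_congr rfl fun i _ => ?_
  rw [intervalIntegral.integral_const, smul_eq_mul]
  field_simp
  ring

lemma mul_log_mul_eq {x : ℝ} (hx : x ≠ 0) (c : ℝ) :
    c * log (x * c) = c * log x + c * log c := by
  rcases eq_or_ne c 0 with rfl | hc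
  · simp
  · rw [log_mul hx hc, mul_add]

lemma IsUniformStep.setIntegral_mul_log_mul (hn : 0 < n) (hf : IsUniformStep n v f) :
    ∫ x in Set.Ioo 0 1, f x * log (x * f x) =
      ∑ i ∈ Icc 1 n,
        v i * ((∫ x in ((i : ℝ) - 1) / n..(i : ℝ) / n, log x) + log (v i) / n) := by
  have hlog (c : ℝ) {a b : ℝ} : IntervalIntegrable (fun x => c * log x) volume a b :=
    intervalIntegral.intervalIntegrable_log'.const_mul c
  rw [setIntegral_Ioo_zero_one_eq_sum hn (h := fun i x => v i * log x + v i * log (v i))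
    (fun i hi x hx => ?_) fun i _ => (hlog _).add intervalIntegrable_const]
  · refine sum_congr rfl fun i _ => ?_
    rw [intervalIntegral.integral_add (hlog _) intervalIntegrable_const,
      intervalIntegral.integral_const_mul, intervalIntegral.integral_const, smul_eq_mul]
    field_simp
    ring
  · have hleft : 0 ≤ ((i : ℝ) - 1) / n :=
      div_nonneg (sub_nonneg.2 (Nat.one_le_cast.2 (mem_Icc.1 hi).1)) n.cast_nonneg
    simp only [hf i hi hx]
    exact mul_log_mul_eq (hleft.trans_lt hx.1).ne' _

end UniformPartition

section SlideDerivative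

variable {n : ℕ} {d : ℕ → ℝ}

lemma slideFun_one_of_isUniformStep (hn : 0 < n) {f : ℝ → ℝ} (hf : IsUniformStep n d f)
    (t : ℝ) :
    slideFun 1 f t = -1 - ∑ i ∈ Icc 1 n, d i ^ t / meanRpow n d t *
      ((∫ x in ((i : ℝ) - 1) / n..(i : ℝ) / n, log x) +
        log (d i ^ t / meanRpow n d t) / n) := by
  have hA : ∫ y in Set.Ioo 0 1, f y ^ t = meanRpow n d t := (hf.comp (· ^ t)).setIntegral hn
  rw [slideFun, hA, (hf.comp (· ^ t / meanRpow n d t)).setIntegral_mul_log_mul hn]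

lemma meanRpow_zero (hn : 0 < n) (d : ℕ → ℝ) : meanRpow n d 0 = 1 := by
  simp [meanRpow, hn.ne']

lemma hasDerivAt_meanRpow (hd : ∀ i ∈ Icc 1 n, 0 < d i) :
    HasDerivAt (meanRpow n d) ((∑ i ∈ Icc 1 n, log (d i)) / n) 0 := by
  have h := HasDerivAt.fun_sum fun i hi => by
    simpa using (hasStrictDerivAt_const_rpow (hd i hi) 0).hasDerivAt
  exact h.div_const (n : ℝ)

lemma hasDerivAt_rpow_div_meanRpow (hn : 0 < n) (hd : ∀ i ∈ Icc 1 n, 0 < d i) {i : ℕ}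
    (hi : i ∈ Icc 1 n) :
    HasDerivAt (fun t => d i ^ t / meanRpow n d t)
      (log (d i) - (∑ j ∈ Icc 1 n, log (d j)) / n) 0 := by
  have h := (hasStrictDerivAt_const_rpow (hd i hi) 0).hasDerivAt.fun_div (hasDerivAt_meanRpow hd)
    (by simp [meanRpow_zero hn])
  simpa [meanRpow_zero hn] using h

lemma hasDerivAt_neg_one_sub_sum_mul_add_log (hn : 0 < n) (hd : ∀ i ∈ Icc 1 n, 0 < d i)
    (K : ℕ → ℝ) :
    HasDerivAt (fun t => -1 - ∑ i ∈ Icc 1 n,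
        d i ^ t / meanRpow n d t * (K i + log (d i ^ t / meanRpow n d t) / n))
      (-∑ i ∈ Icc 1 n, (log (d i) - (∑ j ∈ Icc 1 n, log (d j)) / n) * (K i + 1 / n)) 0 := by
  have hterm : ∀ i ∈ Icc 1 n, HasDerivAt
      (fun t => d i ^ t / meanRpow n d t * (K i + log (d i ^ t / meanRpow n d t) / n))
      ((log (d i) - (∑ j ∈ Icc 1 n, log (d j)) / n) * (K i + 1 / n)) 0 := by
    intro i hi
    have hc := hasDerivAt_rpow_div_meanRpow hn hd hi
    have hc0 : d i ^ (0 : ℝ) / meanRpow n d 0 = 1 := by simp [meanRpow_zero hn]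
    refine (hc.fun_mul (((hc.log (by rw [hc0]; exact one_ne_zero)).div_const (n : ℝ)).const_add
      (K i))).congr_deriv ?_
    rw [hc0, log_one]
    ring
  simpa using (HasDerivAt.fun_sum hterm).const_sub (-1)

end SlideDerivative

lemma sum_Icc_mul_sub_pred_eq {R : Type*} [CommRing R] (e B : ℕ → R) (hB : B 0 = 0) (n : ℕ) :
    ∑ i ∈ Icc 1 n, e i * (B i - B (i - 1)) =
      e n * B n - ∑ i ∈ Icc 1 (n - 1), (e (i + 1) - e i) * B i := by
  induction n with
  | zero => simp [hB]
  | succ n ih =>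
    rw [sum_Icc_succ_top (Nat.le_add_left 1 n), ih, add_tsub_cancel_right]
    rcases n with _ | n
    · simp [hB]
    · rw [add_tsub_cancel_right, sum_Icc_succ_top (Nat.le_add_left 1 n)]
      ring

lemma mul_log_div_eq (x y : ℝ) : x / y * log (x / y) = (x * log x - x * log y) / y := by
  rcases eq_or_ne x 0 with rfl | hx
  · simp
  rcases eq_or_ne y 0 with rfl | hy
  · simp
  rw [log_div hx hy]
  ring

lemma neg_sum_mul_sub_mul_log_div_eq {n : ℕ} (hn : 0 < n) (L : ℕ → ℝ) (m : ℝ) :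
    -∑ i ∈ Icc 1 n, (L i - m) *
        ((i : ℝ) / n * log ((i : ℝ) / n) - ((i : ℝ) - 1) / n * log (((i : ℝ) - 1) / n)) =
      1 / n * ∑ i ∈ Icc 2 (n - 1), (i : ℝ) * log i * (L (i + 1) - L i) +
        log n / n * ∑ i ∈ Icc 1 (n - 1), (L i - L n) := by
  -- `m` is arbitrary because the increments of `x log x` over the pieces telescope to `0`.
  set h : ℕ → ℝ := fun j => j * log j
  have hΔ : ∀ i ∈ Icc 1 n, (L i - m) *
      ((i : ℝ) / n * log ((i : ℝ) / n) - ((i : ℝ) - 1) / n * log (((i : ℝ) - 1) / n)) =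
      (L i - m) * (h i - h (i - 1)) / n - log n / n * (L i - m) := by
    intro i hi
    simp only [h, Nat.cast_sub (mem_Icc.1 hi).1, Nat.cast_one, mul_log_div_eq]
    ring
  have hdrop : ∑ i ∈ Icc 1 (n - 1), ((L (i + 1) - m) - (L i - m)) * h i =
      ∑ i ∈ Icc 2 (n - 1), (i : ℝ) * log i * (L (i + 1) - L i) := by
    rw [← sum_subset (Icc_subset_Icc_left one_le_two) fun i hi hi' => ?_]
    · exact sum_congr rfl fun i _ => by ring
    · have : i = 1 := by simp only [mem_Icc] at hi hi'; omega
      simp [this, h]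
  obtain ⟨k, rfl⟩ := Nat.exists_eq_add_one_of_ne_zero hn.ne'
  have hsplit : ∑ i ∈ Icc 1 (k + 1), (L i - m) =
      ∑ i ∈ Icc 1 k, (L i - L (k + 1)) + (k + 1) * (L (k + 1) - m) := by
    have hconst : ∑ i ∈ Icc 1 k, (L i - m) - ∑ i ∈ Icc 1 k, (L i - L (k + 1)) =
        k * (L (k + 1) - m) := by
      rw [← sum_sub_distrib]
      simp [mul_sub]
    rw [sum_Icc_succ_top (Nat.le_add_left 1 k)]
    linear_combination hconst
  rw [sum_congr rfl hΔ, sum_sub_distrib, ← sum_div, ← mul_sum,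
    sum_Icc_mul_sub_pred_eq (fun i => L i - m) h (by simp [h]), hdrop, hsplit]
  simp only [h, add_tsub_cancel_right]
  push_cast
  field_simp
  ring

theorem first_slide_derivative_step_general (n : ℕ) (hn : 0 < n) (d : ℕ → ℝ)
    (hpos : ∀ i, 1 ≤ i → i ≤ n → 0 < d i)
    (fD : ℝ → ℝ)
    (hfD : ∀ i, 1 ≤ i → i ≤ n →
      ∀ x ∈ Set.Ico (((i:ℝ) - 1) / n) ((i:ℝ) / n), fD x = d i) :
    HasDerivWithinAt (slideFun 1 fD)
      ((1 / n) * ∑ i ∈ Finset.Icc 2 (n - 1), (i : ℝ) * Real.log i * Real.log (d (i + 1) / d i)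
        + (Real.log n / n) * ∑ i ∈ Finset.Icc 1 (n - 1), Real.log (d i / d n))
      (Set.Ici 0) 0 := by
  have hd : ∀ i ∈ Icc 1 n, 0 < d i := fun i hi => hpos i (mem_Icc.1 hi).1 (mem_Icc.1 hi).2
  have hstep : IsUniformStep n d fD := fun i hi x hx =>
    hfD i (mem_Icc.1 hi).1 (mem_Icc.1 hi).2 x (Set.Ioo_subset_Ico_self hx)
  have hK (i : ℕ) : (∫ x in ((i : ℝ) - 1) / n..(i : ℝ) / n, log x) + 1 / n =
      i / n * log (i / n) - (i - 1) / n * log ((i - 1) / n) := by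
    rw [integral_log]
    ring
  have hderiv := hasDerivAt_neg_one_sub_sum_mul_add_log hn hd
    fun i => ∫ x in ((i : ℝ) - 1) / n..(i : ℝ) / n, log x
  simp only [hK, neg_sum_mul_sub_mul_log_div_eq hn] at hderiv
  rw [funext (slideFun_one_of_isUniformStep hn hstep)]
  refine hderiv.hasDerivWithinAt.congr_deriv ?_
  have hlog_div {i j : ℕ} (hi : i ∈ Icc 1 n) (hj : j ∈ Icc 1 n) :
      log (d i / d j) = log (d i) - log (d j) := log_div (hd i hi).ne' (hd j hj).ne'
  congr 2 <;> refine sum_congr rfl fun i hi => ?_ <;> simp only [mem_Icc] at hi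
  · rw [hlog_div (mem_Icc.2 ⟨by omega, by omega⟩) (mem_Icc.2 ⟨by omega, by omega⟩)]
  · rw [hlog_div (mem_Icc.2 ⟨by omega, by omega⟩) (mem_Icc.2 ⟨by omega, by omega⟩)]

/-- For `d₁ ≥ d₂ ≥ ⋯ ≥ d_n > 0`, let `f_D` be the step function on
`[0,1)` with value `d_i` on `[(i-1)/n, i/n)`.  Then the first slide derivative of `f_D`
(the right-hand derivative of `σ_{f_D}` at `0`) equals
`(1/n) Σ_{i=2}^{n-1} i ln(i) ln(d_{i+1}/d_i) + (ln(n)/n) Σ_{i=1}^{n-1} ln(d_i/d_n)`. -/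
theorem first_slide_derivative_step (n : ℕ) (hn : 0 < n) (d : ℕ → ℝ)
    (hmono : ∀ i j, 1 ≤ i → i ≤ j → j ≤ n → d j ≤ d i)
    (hpos : ∀ i, 1 ≤ i → i ≤ n → 0 < d i)
    (fD : ℝ → ℝ)
    (hfD : ∀ i, 1 ≤ i → i ≤ n →
      ∀ x ∈ Set.Ico (((i:ℝ) - 1) / n) ((i:ℝ) / n), fD x = d i) :
    HasDerivWithinAt (slideFun 1 fD)
      ((1 / n) * ∑ i ∈ Finset.Icc 2 (n - 1), (i : ℝ) * Real.log i * Real.log (d (i + 1) / d i)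
        + (Real.log n / n) * ∑ i ∈ Finset.Icc 1 (n - 1), Real.log (d i / d n))
      (Set.Ici 0) 0 :=
  first_slide_derivative_step_general n hn d hpos fD hfD
end
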